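/- arXiv:2112.09617 — 3 statements merged into one kernel-verified Lean document; each statement's English description precedes it below -/
import Mathlib

section
/- Consider a database D, a canonical set Σ of FDs with an LHS chain, and an SJFCQ Q. Suppose comp(Q,Σ) ≠ ∅ and there exists a variable x of Q such that x ∈ pvar(α,Σ) for every atom α ∈ comp(Q,Σ). Then rfreq(Q, D, Σ) = (1 − ∏_{c ∈ adom(D)} (1 − rfreq(Q_{x↦c}, D^{Σ,Q}, Σ))) × (|rep(D \ D_conf^{Σ,Q}, Σ)| / |rep(D, Σ)|), where D^{Σ,Q} = D \ (D_conf^{Σ,Q} ∪ D_ind^{Σ,Q}). -/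
open scoped Classical

/-- A fact over relation name `rel`, assigning a constant to each attribute. -/
structure DBFact (Rel Attr Const : Type*) where
  rel : Rel
  val : Attr → Const

/-- A functional dependency `rel : lhs → rhs`. -/
structure DBFD (Rel Attr : Type*) where
  rel : Rel
  lhs : Set Attr
  rhs : Set Attr

/-- A term of a conjunctive query: a variable or a constant. -/
inductive DBTerm (Var Const : Type*) where
  | var : Var → DBTerm Var Const
  | const : Const → DBTerm Var Const

/-- An atom of a conjunctive query. -/
structure DBAtom (Rel Attr Var Const : Type*) where
  rel : Rel
  val : Attr → DBTerm Var Const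

variable {Rel Attr Var Const : Type*}

/-- A database satisfies a single FD. -/
def satFD (D : Finset (DBFact Rel Attr Const)) (φ : DBFD Rel Attr) : Prop :=
  ∀ f ∈ D, ∀ g ∈ D, f.rel = φ.rel → g.rel = φ.rel →
    (∀ A ∈ φ.lhs, f.val A = g.val A) → ∀ A ∈ φ.rhs, f.val A = g.val A

/-- A database satisfies a set of FDs. -/
def satFDs (D : Finset (DBFact Rel Attr Const)) (S : Set (DBFD Rel Attr)) : Prop :=
  ∀ φ ∈ S, satFD D φ

/-- `E` is a repair of `D` w.r.t. `S`: an inclusion-maximal consistent subset of `D`. -/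
def isRepair (S : Set (DBFD Rel Attr)) (D E : Finset (DBFact Rel Attr Const)) : Prop :=
  E ⊆ D ∧ satFDs E S ∧ ∀ F, E ⊆ F → F ⊆ D → satFDs F S → F = E

/-- The set of repairs of `D` w.r.t. `S`. -/
noncomputable def rep (D : Finset (DBFact Rel Attr Const)) (S : Set (DBFD Rel Attr)) :
    Finset (Finset (DBFact Rel Attr Const)) :=
  D.powerset.filter (fun E => isRepair S D E)

/-- Applying a homomorphism (a map from variables to constants) to an atom yields a fact. -/
def applyHom (h : Var → Const) (α : DBAtom Rel Attr Var Const) : DBFact Rel Attr Const :=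
  ⟨α.rel, fun A => match α.val A with
    | DBTerm.var v => h v
    | DBTerm.const c => c⟩

/-- `D ⊨ Q`: there is a homomorphism from the CQ `Q` into `D`. -/
def entails (D : Finset (DBFact Rel Attr Const)) (Q : Finset (DBAtom Rel Attr Var Const)) :
    Prop :=
  ∃ h : Var → Const, ∀ α ∈ Q, applyHom h α ∈ D

/-- The repairs of `D` w.r.t. `S` that entail `Q`. -/
noncomputable def repQ (D : Finset (DBFact Rel Attr Const)) (S : Set (DBFD Rel Attr))
    (Q : Finset (DBAtom Rel Attr Var Const)) : Finset (Finset (DBFact Rel Attr Const)) :=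
  (rep D S).filter (fun E => entails E Q)

/-- The relative frequency of `Q` w.r.t. `D` and `S`. -/
noncomputable def rfreq (Q : Finset (DBAtom Rel Attr Var Const))
    (D : Finset (DBFact Rel Attr Const)) (S : Set (DBFD Rel Attr)) : ℚ :=
  ((repQ D S Q).card : ℚ) / ((rep D S).card : ℚ)

/-- `Q` is self-join-free: no relation name occurs in two distinct atoms. -/
def sjf (Q : Finset (DBAtom Rel Attr Var Const)) : Prop :=
  ∀ α ∈ Q, ∀ β ∈ Q, α.rel = β.rel → α = β

/-- A canonical set of FDs with an LHS chain, given by the chain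
`R : X₁ → Y₁, …, R : Xₙ → Yₙ` for each relation name `R`, with
`X₁ ⊊ X₂ ⊊ ⋯ ⊊ Xₙ`, each `Y_i` nonempty, `X_i ∩ Y_j = ∅` for all `i,j`,
and `Y_i ∩ Y_j = ∅` for `i ≠ j`. -/
def canonicalChain (chain : Rel → List (Set Attr × Set Attr)) : Prop :=
  ∀ R : Rel,
    ((chain R).Pairwise fun a b => a.1 ⊂ b.1) ∧
    (∀ xy ∈ chain R, (xy.2 : Set Attr).Nonempty) ∧
    (∀ xy ∈ chain R, ∀ xy' ∈ chain R, xy.1 ∩ xy'.2 = ∅) ∧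
    ((chain R).Pairwise fun a b => a.2 ∩ b.2 = ∅)

/-- The set of FDs induced by a chain. -/
def chainFDs (chain : Rel → List (Set Attr × Set Attr)) : Set (DBFD Rel Attr) :=
  {φ | ∃ xy ∈ chain φ.rel, φ.lhs = xy.1 ∧ φ.rhs = xy.2}

/-- The `i`-th FD of the chain `L` has some attribute carrying a variable in atom `α`. -/
def chainVarAt (L : List (Set Attr × Set Attr)) (α : DBAtom Rel Attr Var Const) (i : ℕ) :
    Prop :=
  ∃ xy, L[i]? = some xy ∧ ∃ A ∈ xy.1 ∪ xy.2, ∃ v, α.val A = DBTerm.var v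

/-- The index of the primary FD of the chain `L` w.r.t. the atom `α` (if it exists):
the first FD some of whose attributes carries a variable in `α`. -/
noncomputable def primaryIdx (L : List (Set Attr × Set Attr))
    (α : DBAtom Rel Attr Var Const) : Option ℕ :=
  if h : ∃ i, chainVarAt L α i then some (Nat.find h) else none

/-- The primary FD of the chain `L` w.r.t. the atom `α` (if it exists). -/
noncomputable def primaryFD (L : List (Set Attr × Set Attr))
    (α : DBAtom Rel Attr Var Const) : Option (Set Attr × Set Attr) :=
  (primaryIdx L α).bind fun i => L[i]?

/-- The primary prefix of the chain `L` w.r.t. the atom `α`: the FDs strictly before the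
primary FD, or the whole chain if there is no primary FD. -/
noncomputable def primaryPrefix (L : List (Set Attr × Set Attr))
    (α : DBAtom Rel Attr Var Const) : List (Set Attr × Set Attr) :=
  L.take ((primaryIdx L α).getD L.length)

/-- The primary-lhs positions (attributes) of the atom `α` w.r.t. the chain `L`. -/
noncomputable def primaryLhs (L : List (Set Attr × Set Attr))
    (α : DBAtom Rel Attr Var Const) : Set Attr :=
  match primaryFD L α with
  | some xy => xy.1
  | none => Set.univ

/-- The variables of `α` occurring at primary-lhs positions. -/
noncomputable def pvar (L : List (Set Attr × Set Attr))
    (α : DBAtom Rel Attr Var Const) : Set Var :=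
  {v | ∃ A ∈ primaryLhs L α, α.val A = DBTerm.var v}

/-- A liaison variable of `Q`: a variable with more than one occurrence in `Q`. -/
def liaison (Q : Finset (DBAtom Rel Attr Var Const)) (v : Var) : Prop :=
  ∃ α ∈ Q, ∃ β ∈ Q, ∃ A B, α.val A = DBTerm.var v ∧ β.val B = DBTerm.var v ∧
    (α ≠ β ∨ A ≠ B)

/-- The complex part `comp(Q,Σ)` of `Q` w.r.t. the chain. -/
noncomputable def compPart (chain : Rel → List (Set Attr × Set Attr))
    (Q : Finset (DBAtom Rel Attr Var Const)) : Finset (DBAtom Rel Attr Var Const) :=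
  Q.filter fun α => ∃ A, A ∉ primaryLhs (chain α.rel) α ∧
    ((∃ c, α.val A = DBTerm.const c) ∨ ∃ v, α.val A = DBTerm.var v ∧ liaison Q v) ∧
    ∀ xy ∈ primaryPrefix (chain α.rel) α, A ∉ xy.1 ∪ xy.2

/-- The fact `f` agrees with the atom `α` at attribute `A`, i.e. `α[A]` is the
constant `f[A]`. -/
def agreesAt (f : DBFact Rel Attr Const) (α : DBAtom Rel Attr Var Const) (A : Attr) : Prop :=
  α.val A = DBTerm.const (f.val A)

/-- `D_conf^{Σ,Q}`: the facts of `D` conflicting with `Q` via an FD of the primary prefix. -/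
noncomputable def dconf (chain : Rel → List (Set Attr × Set Attr))
    (Q : Finset (DBAtom Rel Attr Var Const)) (D : Finset (DBFact Rel Attr Const)) :
    Finset (DBFact Rel Attr Const) :=
  D.filter fun f => ∃ α ∈ Q, α.rel = f.rel ∧
    ∃ xy ∈ primaryPrefix (chain α.rel) α,
      (∀ A ∈ xy.1, agreesAt f α A) ∧ ∃ B ∈ xy.2, ¬ agreesAt f α B

/-- `D_ind^{Σ,Q}`: the facts of `D \ D_conf^{Σ,Q}` disagreeing with `Q` on the lhs of an
FD of the primary prefix. -/
noncomputable def dind (chain : Rel → List (Set Attr × Set Attr))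
    (Q : Finset (DBAtom Rel Attr Var Const)) (D : Finset (DBFact Rel Attr Const)) :
    Finset (DBFact Rel Attr Const) :=
  (D \ dconf chain Q D).filter fun f => ∃ α ∈ Q, α.rel = f.rel ∧
    ∃ xy ∈ primaryPrefix (chain α.rel) α, ∃ A ∈ xy.1, ¬ agreesAt f α A

/-- The active domain of `D`: the constants occurring in `D`. -/
noncomputable def adom [Fintype Attr] (D : Finset (DBFact Rel Attr Const)) : Finset Const :=
  D.biUnion fun f => Finset.univ.image f.val

/-- Substituting a constant for a variable in a term. -/
noncomputable def substTerm (x : Var) (c : Const) : DBTerm Var Const → DBTerm Var Const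
  | DBTerm.var v => if v = x then DBTerm.const c else DBTerm.var v
  | DBTerm.const d => DBTerm.const d

/-- Substituting a constant for a variable in an atom. -/
noncomputable def substAtom (x : Var) (c : Const) (α : DBAtom Rel Attr Var Const) :
    DBAtom Rel Attr Var Const :=
  ⟨α.rel, fun A => substTerm x c (α.val A)⟩

/-- `Q_{x↦c}`: the query obtained from `Q` by replacing the variable `x` with `c`. -/
noncomputable def substQ (x : Var) (c : Const) (Q : Finset (DBAtom Rel Attr Var Const)) :
    Finset (DBAtom Rel Attr Var Const) :=
  Q.image (substAtom x c)

/-- The variables occurring in `Q`. -/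
def qvars (Q : Finset (DBAtom Rel Attr Var Const)) : Set Var :=
  {v | ∃ α ∈ Q, ∃ A, α.val A = DBTerm.var v}

/-- `S` has an LHS chain: the left-hand sides of FDs over the same relation are
⊆-comparable. -/
def hasLHSChain (S : Set (DBFD Rel Attr)) : Prop :=
  ∀ φ ∈ S, ∀ ψ ∈ S, φ.rel = ψ.rel → φ.lhs ⊆ ψ.lhs ∨ ψ.lhs ⊆ φ.lhs


/-! ### Auxiliary development: conflict graphs and repairs -/

section AuxConflict

theorem dbfact_ext {f g : DBFact Rel Attr Const} (h1 : f.rel = g.rel)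
    (h2 : ∀ A, f.val A = g.val A) : f = g := by
  cases f with | mk fr fv =>
  cases g with | mk gr gv =>
  cases h1
  exact congrArg (DBFact.mk fr) (funext h2)

/-- A conflicting pair of facts w.r.t. a set of FDs. -/
def conflict (S : Set (DBFD Rel Attr)) (f g : DBFact Rel Attr Const) : Prop :=
  ∃ φ ∈ S, f.rel = φ.rel ∧ g.rel = φ.rel ∧ (∀ A ∈ φ.lhs, f.val A = g.val A) ∧
    ∃ B ∈ φ.rhs, f.val B ≠ g.val B

theorem conflict_symm {S : Set (DBFD Rel Attr)} {f g : DBFact Rel Attr Const}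
    (h : conflict S f g) : conflict S g f := by
  obtain ⟨φ, hφ, h1, h2, h3, B, hB, h4⟩ := h
  exact ⟨φ, hφ, h2, h1, fun A hA => (h3 A hA).symm, B, hB, fun e => h4 e.symm⟩

theorem satFDs_iff_conflict {S : Set (DBFD Rel Attr)} {E : Finset (DBFact Rel Attr Const)} :
    satFDs E S ↔ ∀ f ∈ E, ∀ g ∈ E, ¬ conflict S f g := by
  constructor
  · rintro h f hf g hg ⟨φ, hφ, h1, h2, h3, B, hB, h4⟩
    exact h4 (h φ hφ f hf g hg h1 h2 h3 B hB)
  · intro h φ hφ f hf g hg h1 h2 h3 B hB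
    by_contra h4
    exact h f hf g hg ⟨φ, hφ, h1, h2, h3, B, hB, h4⟩

theorem satFDs_mono {S : Set (DBFD Rel Attr)} {E F : Finset (DBFact Rel Attr Const)}
    (h : satFDs F S) (hEF : E ⊆ F) : satFDs E S := by
  rw [satFDs_iff_conflict] at *
  exact fun f hf g hg => h f (hEF hf) g (hEF hg)

theorem mem_rep {S : Set (DBFD Rel Attr)} {D E : Finset (DBFact Rel Attr Const)} :
    E ∈ rep D S ↔ E ⊆ D ∧ satFDs E S ∧ ∀ F, E ⊆ F → F ⊆ D → satFDs F S → F = E := by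
  rw [rep, Finset.mem_filter, Finset.mem_powerset]
  unfold isRepair
  tauto

theorem rep_nonempty (D : Finset (DBFact Rel Attr Const)) (S : Set (DBFD Rel Attr)) :
    (rep D S).Nonempty := by
  classical
  have h0 : (∅ : Finset (DBFact Rel Attr Const)) ∈
      D.powerset.filter (fun E => satFDs E S) := by
    simp [satFDs_iff_conflict]
  obtain ⟨E, hE, hmax⟩ := Finset.exists_max_image
    (D.powerset.filter fun E => satFDs E S) (fun E => E.card) ⟨∅, h0⟩
  rw [Finset.mem_filter, Finset.mem_powerset] at hE
  refine ⟨E, mem_rep.2 ⟨hE.1, hE.2, fun F hEF hFD hsF => ?_⟩⟩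
  have hF : F ∈ D.powerset.filter (fun E => satFDs E S) := by
    rw [Finset.mem_filter, Finset.mem_powerset]; exact ⟨hFD, hsF⟩
  exact (Finset.eq_of_subset_of_card_le hEF (hmax F hF)).symm

theorem rep_card_pos (D : Finset (DBFact Rel Attr Const)) (S : Set (DBFD Rel Attr)) :
    0 < (rep D S).card :=
  Finset.card_pos.2 (rep_nonempty D S)

theorem rep_anti {S : Set (DBFD Rel Attr)} {D D₀ E : Finset (DBFact Rel Attr Const)}
    (hE : E ∈ rep D S) (h1 : E ⊆ D₀) (h2 : D₀ ⊆ D) : E ∈ rep D₀ S := by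
  rw [mem_rep] at hE ⊢
  exact ⟨h1, hE.2.1, fun F hEF hFD hsF => hE.2.2 F hEF (hFD.trans h2) hsF⟩

theorem rep_inter_nonempty {S : Set (DBFD Rel Attr)} {X B E : Finset (DBFact Rel Attr Const)}
    (hE : E ∈ rep X S) (hBX : B ⊆ X)
    (hsep : ∀ f ∈ B, ∀ g ∈ X, g ∉ B → ¬ conflict S f g)
    (hB : B.Nonempty) : (E ∩ B).Nonempty := by
  classical
  obtain ⟨f, hf⟩ := hB
  rw [mem_rep] at hE
  obtain ⟨hEX, hsat, hmax⟩ := hE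
  by_cases hfE : f ∈ E
  · exact ⟨f, Finset.mem_inter.2 ⟨hfE, hf⟩⟩
  have hnot : ¬ satFDs (insert f E) S := fun hs => hfE (by
    have h := hmax (insert f E) (Finset.subset_insert _ _)
      (Finset.insert_subset (hBX hf) hEX) hs
    rw [← h]; exact Finset.mem_insert_self _ _)
  rw [satFDs_iff_conflict] at hnot
  push_neg at hnot
  obtain ⟨a, ha, b, hb, hab⟩ := hnot
  rw [satFDs_iff_conflict] at hsat
  rcases Finset.mem_insert.1 ha with ha' | ha' <;> rcases Finset.mem_insert.1 hb with hb' | hb'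
  · rw [ha', hb'] at hab
    obtain ⟨φ, _, _, _, _, B', _, h4⟩ := hab
    exact absurd rfl h4
  · rw [ha'] at hab
    by_cases hbB : b ∈ B
    · exact ⟨b, Finset.mem_inter.2 ⟨hb', hbB⟩⟩
    · exact absurd hab (hsep f hf b (hEX hb') hbB)
  · rw [hb'] at hab
    by_cases haB : a ∈ B
    · exact ⟨a, Finset.mem_inter.2 ⟨ha', haB⟩⟩
    · exact absurd (conflict_symm hab) (hsep f hf a (hEX ha') haB)
  · exact absurd hab (hsat a ha' b hb')

theorem rep_split {S : Set (DBFD Rel Attr)} {X B : Finset (DBFact Rel Attr Const)}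
    (hBX : B ⊆ X) (hsep : ∀ f ∈ B, ∀ g ∈ X, g ∉ B → ¬ conflict S f g)
    {E : Finset (DBFact Rel Attr Const)} :
    E ∈ rep X S ↔ E ⊆ X ∧ E ∩ B ∈ rep B S ∧ E \ B ∈ rep (X \ B) S := by
  classical
  have hcross : ∀ {E₁ E₂ : Finset (DBFact Rel Attr Const)}, E₁ ⊆ B → E₂ ⊆ X \ B →
      satFDs E₁ S → satFDs E₂ S → satFDs (E₁ ∪ E₂) S := by
    intro E₁ E₂ h1 h2 hs1 hs2
    rw [satFDs_iff_conflict] at *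
    intro f hf g hg
    rcases Finset.mem_union.1 hf with hf' | hf' <;> rcases Finset.mem_union.1 hg with hg' | hg'
    · exact hs1 f hf' g hg'
    · have := h2 hg'; rw [Finset.mem_sdiff] at this
      exact hsep f (h1 hf') g this.1 this.2
    · have := h2 hf'; rw [Finset.mem_sdiff] at this
      exact fun hc => hsep g (h1 hg') f this.1 this.2 (conflict_symm hc)
    · exact hs2 f hf' g hg'
  constructor
  · intro hE
    rw [mem_rep] at hE
    obtain ⟨hEX, hsat, hmax⟩ := hE
    refine ⟨hEX, mem_rep.2 ⟨Finset.inter_subset_right, satFDs_mono hsat Finset.inter_subset_left,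
      ?_⟩, mem_rep.2 ⟨?_, satFDs_mono hsat (Finset.sdiff_subset), ?_⟩⟩
    · intro F hEF hFB hsF
      have hG : F ∪ (E \ B) = E := by
        apply hmax
        · intro e he
          by_cases heB : e ∈ B
          · exact Finset.mem_union.2 (Or.inl (hEF (Finset.mem_inter.2 ⟨he, heB⟩)))
          · exact Finset.mem_union.2 (Or.inr (Finset.mem_sdiff.2 ⟨he, heB⟩))
        · intro e he
          rcases Finset.mem_union.1 he with h | h
          · exact hBX (hFB h)
          · exact hEX (Finset.mem_sdiff.1 h).1
        · exact hcross hFB (fun e he => Finset.mem_sdiff.2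
            ⟨hEX (Finset.mem_sdiff.1 he).1, (Finset.mem_sdiff.1 he).2⟩) hsF
            (satFDs_mono hsat Finset.sdiff_subset)
      apply Finset.Subset.antisymm _ hEF
      intro e he
      exact Finset.mem_inter.2 ⟨hG ▸ Finset.mem_union.2 (Or.inl he), hFB he⟩
    · intro e he
      rw [Finset.mem_sdiff] at he ⊢
      exact ⟨hEX he.1, he.2⟩
    · intro F hEF hFXB hsF
      have hG : (E ∩ B) ∪ F = E := by
        apply hmax
        · intro e he
          by_cases heB : e ∈ B
          · exact Finset.mem_union.2 (Or.inl (Finset.mem_inter.2 ⟨he, heB⟩))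
          · exact Finset.mem_union.2 (Or.inr (hEF (Finset.mem_sdiff.2 ⟨he, heB⟩)))
        · intro e he
          rcases Finset.mem_union.1 he with h | h
          · exact hEX (Finset.mem_inter.1 h).1
          · exact (Finset.mem_sdiff.1 (hFXB h)).1
        · exact hcross Finset.inter_subset_right hFXB
            (satFDs_mono hsat Finset.inter_subset_left) hsF
      apply Finset.Subset.antisymm _ hEF
      intro e he
      have heE : e ∈ E := hG ▸ Finset.mem_union.2 (Or.inr he)
      exact Finset.mem_sdiff.2 ⟨heE, (Finset.mem_sdiff.1 (hFXB he)).2⟩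
  · rintro ⟨hEX, h1, h2⟩
    rw [mem_rep] at h1 h2
    obtain ⟨h1X, h1s, h1m⟩ := h1
    obtain ⟨h2X, h2s, h2m⟩ := h2
    have hEeq : E ∩ B ∪ E \ B = E := by
      ext e
      simp only [Finset.mem_union, Finset.mem_inter, Finset.mem_sdiff]
      tauto
    refine mem_rep.2 ⟨hEX, ?_, ?_⟩
    · rw [← hEeq]; exact hcross h1X (fun e he => Finset.mem_sdiff.2
        ⟨hEX (Finset.mem_sdiff.1 he).1, (Finset.mem_sdiff.1 he).2⟩) h1s h2s
    · intro F hEF hFX hsF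
      have e1 : F ∩ B = E ∩ B := h1m (F ∩ B)
        (fun e he => Finset.mem_inter.2 ⟨hEF (Finset.mem_inter.1 he).1, (Finset.mem_inter.1 he).2⟩)
        Finset.inter_subset_right (satFDs_mono hsF Finset.inter_subset_left)
      have e2 : F \ B = E \ B := h2m (F \ B)
        (fun e he => Finset.mem_sdiff.2 ⟨hEF (Finset.mem_sdiff.1 he).1, (Finset.mem_sdiff.1 he).2⟩)
        (fun e he => Finset.mem_sdiff.2 ⟨hFX (Finset.mem_sdiff.1 he).1, (Finset.mem_sdiff.1 he).2⟩)
        (satFDs_mono hsF Finset.sdiff_subset)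
      calc F = F ∩ B ∪ F \ B := by
              ext e
              simp only [Finset.mem_union, Finset.mem_inter, Finset.mem_sdiff]
              tauto
        _ = E ∩ B ∪ E \ B := by rw [e1, e2]
        _ = E := hEeq

theorem card_rep_split {S : Set (DBFD Rel Attr)} {X B : Finset (DBFact Rel Attr Const)}
    (hBX : B ⊆ X) (hsep : ∀ f ∈ B, ∀ g ∈ X, g ∉ B → ¬ conflict S f g)
    (φ ψ : Finset (DBFact Rel Attr Const) → Prop) :
    ((rep X S).filter (fun E => φ (E ∩ B) ∧ ψ (E \ B))).card
      = ((rep B S).filter φ).card * ((rep (X \ B) S).filter ψ).card := by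
  classical
  rw [← Finset.card_product]
  apply Finset.card_bij (fun E _ => (E ∩ B, E \ B))
  · intro E hE
    rw [Finset.mem_filter] at hE
    obtain ⟨hE, hφ, hψ⟩ := hE
    rw [rep_split hBX hsep] at hE
    rw [Finset.mem_product]
    exact ⟨Finset.mem_filter.2 ⟨hE.2.1, hφ⟩, Finset.mem_filter.2 ⟨hE.2.2, hψ⟩⟩
  · intro E₁ h₁ E₂ h₂ heq
    have k1 : E₁ ∩ B = E₂ ∩ B := congrArg Prod.fst heq
    have k2 : E₁ \ B = E₂ \ B := congrArg Prod.snd heq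
    have d1 : E₁ ∩ B ∪ E₁ \ B = E₁ := by
      ext e; simp only [Finset.mem_union, Finset.mem_inter, Finset.mem_sdiff]; tauto
    have d2 : E₂ ∩ B ∪ E₂ \ B = E₂ := by
      ext e; simp only [Finset.mem_union, Finset.mem_inter, Finset.mem_sdiff]; tauto
    rw [← d1, ← d2, k1, k2]
  · rintro ⟨E₁, E₂⟩ hp
    rw [Finset.mem_product] at hp
    obtain ⟨hp1, hp2⟩ := hp
    rw [Finset.mem_filter] at hp1 hp2
    have h1B : E₁ ⊆ B := (mem_rep.1 hp1.1).1
    have h2XB : E₂ ⊆ X \ B := (mem_rep.1 hp2.1).1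
    have hi : (E₁ ∪ E₂) ∩ B = E₁ := by
      ext e
      simp only [Finset.mem_inter, Finset.mem_union]
      constructor
      · rintro ⟨h | h, hB⟩
        · exact h
        · exact absurd hB (Finset.mem_sdiff.1 (h2XB h)).2
      · intro h; exact ⟨Or.inl h, h1B h⟩
    have hs : (E₁ ∪ E₂) \ B = E₂ := by
      ext e
      simp only [Finset.mem_sdiff, Finset.mem_union]
      constructor
      · rintro ⟨h | h, hB⟩
        · exact absurd (h1B h) hB
        · exact h
      · intro h; exact ⟨Or.inr h, (Finset.mem_sdiff.1 (h2XB h)).2⟩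
    refine ⟨E₁ ∪ E₂, Finset.mem_filter.2 ⟨?_, ?_, ?_⟩, ?_⟩
    · rw [rep_split hBX hsep, hi, hs]
      refine ⟨?_, hp1.1, hp2.1⟩
      intro e he
      rcases Finset.mem_union.1 he with h | h
      · exact hBX (h1B h)
      · exact (Finset.mem_sdiff.1 (h2XB h)).1
    · rw [hi]; exact hp1.2
    · rw [hs]; exact hp2.2
    · rw [hi, hs]

end AuxConflict
section AuxParts

theorem card_rep_parts {S : Set (DBFD Rel Attr)} {κ : Type*}
    (P : κ → Finset (DBFact Rel Attr Const))
    (Φ : κ → Finset (DBFact Rel Attr Const) → Prop)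
    (C : Finset κ) :
    ∀ (X : Finset (DBFact Rel Attr Const)),
    (∀ c ∈ C, P c ⊆ X) →
    (∀ c ∈ C, ∀ c' ∈ C, c ≠ c' → ∀ f ∈ P c, f ∉ P c') →
    (∀ c ∈ C, ∀ f ∈ P c, ∀ g ∈ X, g ∉ P c → ¬ conflict S f g) →
    ((rep X S).filter (fun E => ∀ c ∈ C, Φ c (E ∩ P c))).card
      = (∏ c ∈ C, ((rep (P c) S).filter (Φ c)).card) * (rep (X \ C.biUnion P) S).card := by
  classical
  induction C using Finset.induction_on with
  | empty =>
    intro X _ _ _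
    simp only [Finset.notMem_empty, false_implies, implies_true, Finset.prod_empty, one_mul,
      Finset.biUnion_empty, Finset.sdiff_empty]
    rw [Finset.filter_true_of_mem (fun _ _ => trivial)]
  | @insert c₀ C hc₀ ih =>
    intro X hsub hdisj hsep
    have hc₀C : c₀ ∈ insert c₀ C := Finset.mem_insert_self _ _
    have hstep : ∀ E : Finset (DBFact Rel Attr Const), ∀ c ∈ C,
        (E \ P c₀) ∩ P c = E ∩ P c := by
      intro E c hc
      ext e
      simp only [Finset.mem_inter, Finset.mem_sdiff]
      constructor
      · rintro ⟨⟨h1, _⟩, h2⟩; exact ⟨h1, h2⟩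
      · rintro ⟨h1, h2⟩
        exact ⟨⟨h1, hdisj c (Finset.mem_insert_of_mem hc) c₀ hc₀C
          (fun h => hc₀ (h ▸ hc)) e h2⟩, h2⟩
    have hfe : (rep X S).filter (fun E => ∀ c ∈ insert c₀ C, Φ c (E ∩ P c))
        = (rep X S).filter (fun E => Φ c₀ (E ∩ P c₀) ∧ ∀ c ∈ C, Φ c ((E \ P c₀) ∩ P c)) := by
      apply Finset.filter_congr
      intro E _
      simp only [Finset.forall_mem_insert, eq_iff_iff]
      constructor
      · rintro ⟨h1, h2⟩; exact ⟨h1, fun c hc => (hstep E c hc) ▸ h2 c hc⟩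
      · rintro ⟨h1, h2⟩; exact ⟨h1, fun c hc => (hstep E c hc) ▸ h2 c hc⟩
    have hsplit := card_rep_split (hsub c₀ hc₀C)
      (fun f hf g hg hgB => hsep c₀ hc₀C f hf g hg hgB)
      (Φ c₀) (fun E' => ∀ c ∈ C, Φ c (E' ∩ P c))
    have hXsub : ∀ c ∈ C, P c ⊆ X \ P c₀ := by
      intro c hc e he
      refine Finset.mem_sdiff.2 ⟨hsub c (Finset.mem_insert_of_mem hc) he, ?_⟩
      exact hdisj c (Finset.mem_insert_of_mem hc) c₀ hc₀C (fun h => hc₀ (h ▸ hc)) e he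
    have hih := ih (X \ P c₀) hXsub
      (fun c hc c' hc' hne => hdisj c (Finset.mem_insert_of_mem hc) c'
        (Finset.mem_insert_of_mem hc') hne)
      (fun c hc f hf g hg hgP => hsep c (Finset.mem_insert_of_mem hc) f hf g
        (Finset.mem_sdiff.1 hg).1 hgP)
    have hsd : (X \ P c₀) \ C.biUnion P = X \ (insert c₀ C).biUnion P := by
      ext e
      simp only [Finset.mem_sdiff, Finset.mem_biUnion, Finset.mem_insert]
      constructor
      · rintro ⟨⟨h1, h2⟩, h3⟩
        refine ⟨h1, ?_⟩
        rintro ⟨c, hc | hc, hec⟩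
        · exact h2 (hc ▸ hec)
        · exact h3 ⟨c, hc, hec⟩
      · rintro ⟨h1, h2⟩
        exact ⟨⟨h1, fun h => h2 ⟨c₀, Or.inl rfl, h⟩⟩, fun ⟨c, hc, hec⟩ => h2 ⟨c, Or.inr hc, hec⟩⟩
    have hbridge : ∀ (s : Finset (Finset (DBFact Rel Attr Const)))
        (p : Finset (DBFact Rel Attr Const) → Prop) (h1 h2 : DecidablePred p),
        (@Finset.filter _ p h1 s).card = (@Finset.filter _ p h2 s).card := by
      intro s p h1 h2
      rw [Subsingleton.elim h1 h2]
    rw [hfe]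
    refine Eq.trans (hbridge _ _ _ _) (hsplit.trans ?_)
    rw [Finset.prod_insert hc₀, mul_assoc]
    congr 1
    refine Eq.trans (hbridge _ _ _ _) (hih.trans ?_)
    rw [hsd]

end AuxParts
section AuxChain

theorem primaryIdx_some_iff {L : List (Set Attr × Set Attr)} {α : DBAtom Rel Attr Var Const}
    {i : ℕ} (h : primaryIdx L α = some i) :
    chainVarAt L α i ∧ ∀ j < i, ¬ chainVarAt L α j := by
  unfold primaryIdx at h
  split at h
  · rename_i hex
    rw [Option.some_inj] at h
    subst h
    exact ⟨Nat.find_spec hex, fun j hj => Nat.find_min hex hj⟩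
  · exact absurd h (by simp)

theorem primaryIdx_none_iff {L : List (Set Attr × Set Attr)} {α : DBAtom Rel Attr Var Const}
    (h : primaryIdx L α = none) : ∀ j, ¬ chainVarAt L α j := by
  unfold primaryIdx at h
  split at h
  · exact absurd h (by simp)
  · rename_i hex
    push_neg at hex
    exact hex

theorem mem_primaryPrefix_spec {L : List (Set Attr × Set Attr)} {α : DBAtom Rel Attr Var Const}
    {xy : Set Attr × Set Attr} (h : xy ∈ primaryPrefix L α) :
    ∃ j, ∃ (hj : j < L.length), L[j] = xy ∧ ¬ chainVarAt L α j ∧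
      (∀ i, primaryIdx L α = some i → j < i) := by
  unfold primaryPrefix at h
  obtain ⟨j, hj, hje⟩ := List.mem_iff_getElem.1 h
  have hjlen : j < L.length := lt_of_lt_of_le hj (by
    rw [List.length_take]; exact min_le_right _ _)
  have hjk : j < (primaryIdx L α).getD L.length := lt_of_lt_of_le hj (by
    rw [List.length_take]; exact min_le_left _ _)
  have hgete : L[j] = xy := by
    rw [List.getElem_take] at hje; exact hje
  refine ⟨j, hjlen, hgete, ?_, ?_⟩
  · cases hidx : primaryIdx L α with
    | none => exact primaryIdx_none_iff hidx j
    | some i =>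
      have := (primaryIdx_some_iff hidx).2
      exact this j (by rwa [hidx] at hjk)
  · intro i hi
    rwa [hi] at hjk

theorem mem_primaryPrefix_of_index {L : List (Set Attr × Set Attr)}
    {α : DBAtom Rel Attr Var Const} {j : ℕ} (hj : j < L.length)
    (hjk : j < (primaryIdx L α).getD L.length) : L[j] ∈ primaryPrefix L α := by
  unfold primaryPrefix
  have hlen : j < (L.take ((primaryIdx L α).getD L.length)).length := by
    rw [List.length_take]; exact lt_min hjk hj
  have : (L.take ((primaryIdx L α).getD L.length))[j] = L[j] := List.getElem_take
  rw [← this]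
  exact List.getElem_mem _

theorem primaryPrefix_subset {L : List (Set Attr × Set Attr)} {α : DBAtom Rel Attr Var Const}
    {xy : Set Attr × Set Attr} (h : xy ∈ primaryPrefix L α) : xy ∈ L :=
  List.mem_of_mem_take h

theorem const_of_mem_primaryPrefix {L : List (Set Attr × Set Attr)}
    {α : DBAtom Rel Attr Var Const} {xy : Set Attr × Set Attr}
    (h : xy ∈ primaryPrefix L α) :
    ∀ A ∈ xy.1 ∪ xy.2, ∃ d, α.val A = DBTerm.const d := by
  obtain ⟨j, hj, hje, hnv, _⟩ := mem_primaryPrefix_spec h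
  intro A hA
  cases hval : α.val A with
  | var v =>
    exact absurd ⟨xy, by rw [List.getElem?_eq_getElem hj, hje], A, hA, v, hval⟩ hnv
  | const d => exact ⟨d, rfl⟩

theorem primaryIdx_spec' {L : List (Set Attr × Set Attr)} {α : DBAtom Rel Attr Var Const}
    {i : ℕ} (h : primaryIdx L α = some i) :
    ∃ (hi : i < L.length), primaryLhs L α = (L[i]).1 := by
  obtain ⟨⟨xy, hxy, _⟩, _⟩ := primaryIdx_some_iff h
  have hilen : i < L.length := by
    by_contra hc
    rw [List.getElem?_eq_none (le_of_not_gt hc)] at hxy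
    exact nomatch hxy
  refine ⟨hilen, ?_⟩
  unfold primaryLhs primaryFD
  rw [h]
  simp only [Option.bind_some]
  rw [List.getElem?_eq_getElem hilen]
theorem val_eq_of_agrees {f g : DBFact Rel Attr Const} {α : DBAtom Rel Attr Var Const}
    {A : Attr} (h1 : agreesAt f α A) (h2 : agreesAt g α A) : f.val A = g.val A :=
  DBTerm.const.inj ((h1.symm.trans h2 : _))

theorem chain_lhs_mono {chain : Rel → List (Set Attr × Set Attr)}
    (hchain : canonicalChain chain) (R : Rel) {j l : ℕ}
    (hj : j < (chain R).length) (hl : l < (chain R).length) (hjl : j ≤ l) :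
    ((chain R)[j]).1 ⊆ ((chain R)[l]).1 := by
  rcases eq_or_lt_of_le hjl with rfl | hlt
  · exact subset_rfl
  · exact subset_of_ssubset ((List.pairwise_iff_getElem.1 (hchain R).1) j l hj hl hlt)

theorem good_agrees {chain : Rel → List (Set Attr × Set Attr)}
    {Q : Finset (DBAtom Rel Attr Var Const)} {D : Finset (DBFact Rel Attr Const)}
    {f : DBFact Rel Attr Const} {α : DBAtom Rel Attr Var Const}
    (hα : α ∈ Q) (hrel : α.rel = f.rel) (hfD : f ∈ D)
    (hfc : f ∉ dconf chain Q D) (hfi : f ∉ dind chain Q D) :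
    ∀ xy ∈ primaryPrefix (chain α.rel) α, ∀ A ∈ xy.1 ∪ xy.2, agreesAt f α A := by
  intro xy hxy A hA
  have hfc' : ¬ (∃ α ∈ Q, α.rel = f.rel ∧ ∃ xy ∈ primaryPrefix (chain α.rel) α,
      (∀ A ∈ xy.1, agreesAt f α A) ∧ ∃ B ∈ xy.2, ¬ agreesAt f α B) := by
    intro hc; exact hfc (Finset.mem_filter.2 ⟨hfD, hc⟩)
  have hfi' : ¬ (∃ α ∈ Q, α.rel = f.rel ∧ ∃ xy ∈ primaryPrefix (chain α.rel) α,
      ∃ A ∈ xy.1, ¬ agreesAt f α A) := by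
    intro hc; exact hfi (Finset.mem_filter.2 ⟨Finset.mem_sdiff.2 ⟨hfD, hfc⟩, hc⟩)
  push_neg at hfc' hfi'
  have hX : ∀ A' ∈ xy.1, agreesAt f α A' := fun A' hA' => hfi' α hα hrel xy hxy A' hA'
  rcases hA with hA1 | hA2
  · exact hX A hA1
  · exact hfc' α hα hrel xy hxy hX A hA2

theorem dconf_conflict {chain : Rel → List (Set Attr × Set Attr)}
    {Q : Finset (DBAtom Rel Attr Var Const)} {D : Finset (DBFact Rel Attr Const)}
    {g : DBFact Rel Attr Const} (hg : g ∈ dconf chain Q D) :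
    ∃ α ∈ Q, α.rel = g.rel ∧ ∀ f : DBFact Rel Attr Const, f.rel = α.rel →
      (∀ xy ∈ primaryPrefix (chain α.rel) α, ∀ A ∈ xy.1 ∪ xy.2, agreesAt f α A) →
      conflict (chainFDs chain) f g := by
  obtain ⟨hgD, α, hα, hrel, xy, hxy, hagr, B, hB, hnag⟩ := Finset.mem_filter.1 hg
  refine ⟨α, hα, hrel, fun f hf hfall => ?_⟩
  refine ⟨⟨α.rel, xy.1, xy.2⟩, ⟨xy, primaryPrefix_subset hxy, rfl, rfl⟩, hf, hrel.symm, ?_, ?_⟩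
  · intro A hA
    exact val_eq_of_agrees (hfall xy hxy A (Set.mem_union_left _ hA)) (hagr A hA)
  · refine ⟨B, hB, fun hc => hnag ?_⟩
    have := hfall xy hxy B (Set.mem_union_right _ hB)
    unfold agreesAt at this ⊢
    rw [this, hc]

theorem no_conflict_good_ind {chain : Rel → List (Set Attr × Set Attr)}
    (hchain : canonicalChain chain) {α : DBAtom Rel Attr Var Const}
    {f g : DBFact Rel Attr Const}
    (hf : ∀ xy ∈ primaryPrefix (chain α.rel) α, ∀ A ∈ xy.1 ∪ xy.2, agreesAt f α A)
    (hgc : ∀ xy ∈ primaryPrefix (chain α.rel) α,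
      (∀ A ∈ xy.1, agreesAt g α A) → ∀ B ∈ xy.2, agreesAt g α B)
    (hgi : ∃ xy ∈ primaryPrefix (chain α.rel) α, ∃ A ∈ xy.1, ¬ agreesAt g α A)
    (hfr : f.rel = α.rel) :
    ¬ conflict (chainFDs chain) f g := by
  rintro ⟨φ, ⟨xy', hxy', hl, hr⟩, hfφ, hgφ, hagr, B₀, hB₀, hdiff⟩
  have hrel : φ.rel = α.rel := by rw [← hfφ, hfr]
  rw [hrel] at hxy'
  by_cases hpp : xy' ∈ primaryPrefix (chain α.rel) α
  · by_cases hgX : ∀ A ∈ xy'.1, agreesAt g α A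
    · have hgY := hgc xy' hpp hgX
      have hfB := hf xy' hpp B₀ (Set.mem_union_right _ (by rw [← hr]; exact hB₀))
      have hgB := hgY B₀ (by rw [← hr]; exact hB₀)
      exact hdiff (val_eq_of_agrees hfB hgB)
    · push_neg at hgX
      obtain ⟨A₁, hA₁, hna⟩ := hgX
      have hfA := hf xy' hpp A₁ (Set.mem_union_left _ hA₁)
      have heq := hagr A₁ (by rw [hl]; exact hA₁)
      unfold agreesAt at hfA hna
      exact hna (heq ▸ hfA)
  · obtain ⟨l, hl_len, hle⟩ := List.mem_iff_getElem.1 hxy'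
    cases hidx : primaryIdx (chain α.rel) α with
    | none =>
      apply hpp
      unfold primaryPrefix
      rw [hidx]
      simp only [Option.getD_none]
      rw [List.take_length]
      exact hxy'
    | some i =>
      have hli : i ≤ l := by
        by_contra hc
        push_neg at hc
        apply hpp
        rw [← hle]
        exact mem_primaryPrefix_of_index hl_len (by rw [hidx]; exact hc)
      obtain ⟨xy₁, hxy₁pp, A₁, hA₁, hna⟩ := hgi
      obtain ⟨j₁, hj₁len, hj₁e, _, hj₁lt⟩ := mem_primaryPrefix_spec hxy₁pp
      have hj₁i : j₁ < i := hj₁lt i hidx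
      have hsub : xy₁.1 ⊆ xy'.1 := by
        rw [← hj₁e, ← hle]
        exact chain_lhs_mono hchain α.rel hj₁len hl_len (le_of_lt (lt_of_lt_of_le hj₁i hli))
      have hfA := hf xy₁ hxy₁pp A₁ (Set.mem_union_left _ hA₁)
      have heq := hagr A₁ (by rw [hl]; exact hsub hA₁)
      unfold agreesAt at hfA hna
      exact hna (heq ▸ hfA)

theorem no_conflict_good_good {chain : Rel → List (Set Attr × Set Attr)}
    (hchain : canonicalChain chain) {α : DBAtom Rel Attr Var Const} {i : ℕ}
    (hidx : primaryIdx (chain α.rel) α = some i) {f g : DBFact Rel Attr Const}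
    (hfr : f.rel = α.rel)
    (hf : ∀ xy ∈ primaryPrefix (chain α.rel) α, ∀ A ∈ xy.1 ∪ xy.2, agreesAt f α A)
    (hg : ∀ xy ∈ primaryPrefix (chain α.rel) α, ∀ A ∈ xy.1 ∪ xy.2, agreesAt g α A)
    {A₁ : Attr} (hA₁ : A₁ ∈ primaryLhs (chain α.rel) α) (hne : f.val A₁ ≠ g.val A₁) :
    ¬ conflict (chainFDs chain) f g := by
  rintro ⟨φ, ⟨xy', hxy', hl, hr⟩, hfφ, hgφ, hagr, B₀, hB₀, hdiff⟩
  have hrel : φ.rel = α.rel := by rw [← hfφ, hfr]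
  rw [hrel] at hxy'
  by_cases hpp : xy' ∈ primaryPrefix (chain α.rel) α
  · have hfB := hf xy' hpp B₀ (Set.mem_union_right _ (by rw [← hr]; exact hB₀))
    have hgB := hg xy' hpp B₀ (Set.mem_union_right _ (by rw [← hr]; exact hB₀))
    exact hdiff (val_eq_of_agrees hfB hgB)
  · obtain ⟨l, hl_len, hle⟩ := List.mem_iff_getElem.1 hxy'
    have hli : i ≤ l := by
      by_contra hc
      push_neg at hc
      apply hpp
      rw [← hle]
      exact mem_primaryPrefix_of_index hl_len (by rw [hidx]; exact hc)
    obtain ⟨hilen, hpl⟩ := primaryIdx_spec' hidx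
    have hsub : ((chain α.rel)[i]).1 ⊆ xy'.1 := by
      rw [← hle]
      exact chain_lhs_mono hchain α.rel hilen hl_len hli
    have := hagr A₁ (by rw [hl]; exact hsub (by rw [← hpl]; exact hA₁))
    exact hne this

theorem compPart_primaryIdx {chain : Rel → List (Set Attr × Set Attr)}
    {Q : Finset (DBAtom Rel Attr Var Const)} {α : DBAtom Rel Attr Var Const}
    (hα : α ∈ compPart chain Q) :
    ∃ i, primaryIdx (chain α.rel) α = some i := by
  obtain ⟨hαQ, A, hA, _, _⟩ := Finset.mem_filter.1 hα
  cases hidx : primaryIdx (chain α.rel) α with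
  | none =>
    exfalso
    apply hA
    unfold primaryLhs primaryFD
    rw [hidx]
    simp only [Option.bind_none]
    exact Set.mem_univ A
  | some i => exact ⟨i, rfl⟩

end AuxChain
section AuxSubst

theorem applyHom_rel (h : Var → Const) (α : DBAtom Rel Attr Var Const) :
    (applyHom h α).rel = α.rel := rfl

theorem substAtom_rel (x : Var) (c : Const) (α : DBAtom Rel Attr Var Const) :
    (substAtom x c α).rel = α.rel := rfl

theorem applyHom_val_const {h : Var → Const} {α : DBAtom Rel Attr Var Const} {A : Attr}
    {d : Const} (hval : α.val A = DBTerm.const d) : (applyHom h α).val A = d := by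
  unfold applyHom
  simp only [hval]

theorem applyHom_val_var {h : Var → Const} {α : DBAtom Rel Attr Var Const} {A : Attr}
    {v : Var} (hval : α.val A = DBTerm.var v) : (applyHom h α).val A = h v := by
  unfold applyHom
  simp only [hval]

theorem substAtom_val_const {x : Var} {c : Const} {α : DBAtom Rel Attr Var Const} {A : Attr}
    {d : Const} (hval : α.val A = DBTerm.const d) :
    (substAtom x c α).val A = DBTerm.const d := by
  unfold substAtom substTerm
  simp only [hval]

theorem substAtom_val_x {x : Var} {c : Const} {α : DBAtom Rel Attr Var Const} {A : Attr}
    (hval : α.val A = DBTerm.var x) : (substAtom x c α).val A = DBTerm.const c := by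
  unfold substAtom substTerm
  simp [hval]

theorem substAtom_val_var {x : Var} {c : Const} {α : DBAtom Rel Attr Var Const} {A : Attr}
    {v : Var} (hv : v ≠ x) (hval : α.val A = DBTerm.var v) :
    (substAtom x c α).val A = DBTerm.var v := by
  unfold substAtom substTerm
  simp [hval, hv]

theorem agreesAt_applyHom_const {h : Var → Const} {α : DBAtom Rel Attr Var Const} {A : Attr}
    {d : Const} (hval : α.val A = DBTerm.const d) : agreesAt (applyHom h α) α A := by
  unfold agreesAt
  rw [applyHom_val_const hval, hval]

theorem agreesAt_applyHom_subst_const {h : Var → Const} {x : Var} {c : Const}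
    {α : DBAtom Rel Attr Var Const} {A : Attr} {d : Const}
    (hval : α.val A = DBTerm.const d) : agreesAt (applyHom h (substAtom x c α)) α A := by
  unfold agreesAt
  rw [applyHom_val_const (substAtom_val_const hval), hval]

theorem image_subst_good {chain : Rel → List (Set Attr × Set Attr)}
    {α : DBAtom Rel Attr Var Const} (h : Var → Const) (x : Var) (c : Const) :
    ∀ xy ∈ primaryPrefix (chain α.rel) α, ∀ A ∈ xy.1 ∪ xy.2,
      agreesAt (applyHom h (substAtom x c α)) α A := by
  intro xy hxy A hA
  obtain ⟨d, hd⟩ := const_of_mem_primaryPrefix hxy A hA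
  exact agreesAt_applyHom_subst_const hd

theorem image_good {chain : Rel → List (Set Attr × Set Attr)}
    {α : DBAtom Rel Attr Var Const} (h : Var → Const) :
    ∀ xy ∈ primaryPrefix (chain α.rel) α, ∀ A ∈ xy.1 ∪ xy.2,
      agreesAt (applyHom h α) α A := by
  intro xy hxy A hA
  obtain ⟨d, hd⟩ := const_of_mem_primaryPrefix hxy A hA
  exact agreesAt_applyHom_const hd

theorem entails_substQ_iff {E : Finset (DBFact Rel Attr Const)}
    {Q : Finset (DBAtom Rel Attr Var Const)} {x : Var} {c : Const} :
    entails E (substQ x c Q) ↔ ∃ h : Var → Const, ∀ α ∈ Q, applyHom h (substAtom x c α) ∈ E := by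
  unfold entails substQ
  constructor
  · rintro ⟨h, hh⟩
    exact ⟨h, fun α hα => hh _ (Finset.mem_image_of_mem _ hα)⟩
  · rintro ⟨h, hh⟩
    refine ⟨h, fun β hβ => ?_⟩
    obtain ⟨α, hα, rfl⟩ := Finset.mem_image.1 hβ
    exact hh α hα

theorem applyHom_substAtom_of_eq {h : Var → Const} {x : Var} {c : Const}
    (hx : h x = c) (α : DBAtom Rel Attr Var Const) :
    applyHom h (substAtom x c α) = applyHom h α := by
  have hval : ∀ A, (applyHom h (substAtom x c α)).val A = (applyHom h α).val A := by
    intro A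
    cases hval : α.val A with
    | var v =>
      by_cases hv : v = x
      · subst hv
        rw [applyHom_val_const (substAtom_val_x hval), applyHom_val_var hval, hx]
      · rw [applyHom_val_var (substAtom_val_var hv hval), applyHom_val_var hval]
    | const d =>
      rw [applyHom_val_const (substAtom_val_const hval), applyHom_val_const hval]
  exact congrArg (DBFact.mk α.rel) (funext hval)

theorem applyHom_substAtom_override {h : Var → Const} {x : Var} {c : Const}
    (α : DBAtom Rel Attr Var Const) :
    applyHom (fun v => if v = x then c else h v) α = applyHom h (substAtom x c α) := by
  have hval : ∀ A, (applyHom (fun v => if v = x then c else h v) α).val A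
      = (applyHom h (substAtom x c α)).val A := by
    intro A
    cases hval : α.val A with
    | var v =>
      by_cases hv : v = x
      · subst hv
        simp [applyHom_val_var hval, applyHom_val_const (substAtom_val_x hval)]
      · simp [applyHom_val_var hval, applyHom_val_var (substAtom_val_var hv hval), hv]
    | const d =>
      rw [applyHom_val_const hval, applyHom_val_const (substAtom_val_const hval)]
  exact congrArg (DBFact.mk α.rel) (funext hval)

theorem mem_adom {D : Finset (DBFact Rel Attr Const)} [Fintype Attr]
    {f : DBFact Rel Attr Const} (hf : f ∈ D) (A : Attr) : f.val A ∈ adom D :=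
  Finset.mem_biUnion.2 ⟨f, hf, Finset.mem_image.2 ⟨A, Finset.mem_univ _, rfl⟩⟩

theorem entails_iff_exists_subst [Fintype Attr] {E D : Finset (DBFact Rel Attr Const)}
    {Q : Finset (DBAtom Rel Attr Var Const)} {x : Var}
    (hED : E ⊆ D) {α₀ : DBAtom Rel Attr Var Const} {A₀ : Attr}
    (hα₀ : α₀ ∈ Q) (hx₀ : α₀.val A₀ = DBTerm.var x) :
    entails E Q ↔ ∃ c ∈ adom D, entails E (substQ x c Q) := by
  constructor
  · rintro ⟨h, hh⟩
    refine ⟨h x, ?_, entails_substQ_iff.2 ⟨h, fun α hα => ?_⟩⟩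
    · have hf₀ : applyHom h α₀ ∈ D := hED (hh α₀ hα₀)
      have : (applyHom h α₀).val A₀ = h x := applyHom_val_var hx₀
      rw [← this]
      exact mem_adom hf₀ A₀
    · rw [applyHom_substAtom_of_eq rfl α]
      exact hh α hα
  · rintro ⟨c, _, hent⟩
    obtain ⟨h, hh⟩ := entails_substQ_iff.1 hent
    refine ⟨fun v => if v = x then c else h v, fun α hα => ?_⟩
    rw [applyHom_substAtom_override α]
    exact hh α hα

end AuxSubst
section AuxSetting

/-- `D^{Σ,Q}`: the good part of the database. -/
noncomputable def DgD (chain : Rel → List (Set Attr × Set Attr))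
    (Q : Finset (DBAtom Rel Attr Var Const)) (D : Finset (DBFact Rel Attr Const)) :
    Finset (DBFact Rel Attr Const) :=
  D \ (dconf chain Q D ∪ dind chain Q D)

/-- The part of the good facts over complex relations taking value `c` at the
`x`-positions of the primary lhs. -/
noncomputable def PcD (chain : Rel → List (Set Attr × Set Attr))
    (Q : Finset (DBAtom Rel Attr Var Const)) (x : Var) (D : Finset (DBFact Rel Attr Const))
    (c : Const) : Finset (DBFact Rel Attr Const) :=
  (DgD chain Q D).filter (fun f => ∃ α ∈ compPart chain Q, α.rel = f.rel ∧
    ∀ A ∈ primaryLhs (chain α.rel) α, α.val A = DBTerm.var x → f.val A = c)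

/-- The local event deciding entailment of `Q_{x↦c}`. -/
noncomputable def PsiP (chain : Rel → List (Set Attr × Set Attr))
    (Q : Finset (DBAtom Rel Attr Var Const)) (x : Var) (D : Finset (DBFact Rel Attr Const))
    (c : Const) (ω : Finset (DBFact Rel Attr Const)) : Prop :=
  ∃ h : Var → Const, ∀ α ∈ Q,
    (α ∈ compPart chain Q → applyHom h (substAtom x c α) ∈ ω) ∧
    (α ∉ compPart chain Q → applyHom h (substAtom x c α) ∈ DgD chain Q D)

variable {chain : Rel → List (Set Attr × Set Attr)} {Q : Finset (DBAtom Rel Attr Var Const)}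
  {x : Var} {D : Finset (DBFact Rel Attr Const)}

theorem mem_Q_of_mem_compPart {α : DBAtom Rel Attr Var Const}
    (hα : α ∈ compPart chain Q) : α ∈ Q := (Finset.mem_filter.1 hα).1

theorem mem_DgD {f : DBFact Rel Attr Const} :
    f ∈ DgD chain Q D ↔ f ∈ D ∧ f ∉ dconf chain Q D ∧ f ∉ dind chain Q D := by
  unfold DgD
  simp only [Finset.mem_sdiff, Finset.mem_union]
  tauto

theorem not_dconf_dind_of_agrees (hsjf : sjf Q) {α : DBAtom Rel Attr Var Const}
    (hα : α ∈ Q) {g : DBFact Rel Attr Const} (hgr : g.rel = α.rel)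
    (hagr : ∀ xy ∈ primaryPrefix (chain α.rel) α, ∀ A ∈ xy.1 ∪ xy.2, agreesAt g α A) :
    g ∉ dconf chain Q D ∧ g ∉ dind chain Q D := by
  constructor
  · intro hg
    obtain ⟨_, β, hβ, hβrel, xy, hxy, _, B, hB, hnag⟩ := Finset.mem_filter.1 hg
    have hβα : β = α := hsjf β hβ α hα (by rw [hβrel, hgr])
    subst hβα
    exact hnag (hagr xy hxy B (Set.mem_union_right _ hB))
  · intro hg
    obtain ⟨_, β, hβ, hβrel, xy, hxy, A, hA, hnag⟩ := Finset.mem_filter.1 hg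
    have hβα : β = α := hsjf β hβ α hα (by rw [hβrel, hgr])
    subst hβα
    exact hnag (hagr xy hxy A (Set.mem_union_left _ hA))

theorem no_conflict_good_none {α : DBAtom Rel Attr Var Const}
    (hidx : primaryIdx (chain α.rel) α = none) {f g : DBFact Rel Attr Const}
    (hfr : f.rel = α.rel)
    (hf : ∀ xy ∈ primaryPrefix (chain α.rel) α, ∀ A ∈ xy.1 ∪ xy.2, agreesAt f α A)
    (hg : ∀ xy ∈ primaryPrefix (chain α.rel) α, ∀ A ∈ xy.1 ∪ xy.2, agreesAt g α A) :
    ¬ conflict (chainFDs chain) f g := by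
  rintro ⟨φ, ⟨xy', hxy', hl, hr⟩, hfφ, hgφ, hagr, B₀, hB₀, hdiff⟩
  have hrel : φ.rel = α.rel := by rw [← hfφ, hfr]
  rw [hrel] at hxy'
  have hpp : xy' ∈ primaryPrefix (chain α.rel) α := by
    unfold primaryPrefix
    rw [hidx]
    simp only [Option.getD_none]
    rw [List.take_length]
    exact hxy'
  have hfB := hf xy' hpp B₀ (Set.mem_union_right _ (by rw [← hr]; exact hB₀))
  have hgB := hg xy' hpp B₀ (Set.mem_union_right _ (by rw [← hr]; exact hB₀))
  exact hdiff (val_eq_of_agrees hfB hgB)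

/-- A fact of `dind` never conflicts with a good fact of the same relation. -/
theorem no_conflict_good_dind (hchain : canonicalChain chain) (hsjf : sjf Q)
    {α : DBAtom Rel Attr Var Const} (hα : α ∈ Q) {f g : DBFact Rel Attr Const}
    (hfr : f.rel = α.rel) (hgr : g.rel = α.rel)
    (hf : ∀ xy ∈ primaryPrefix (chain α.rel) α, ∀ A ∈ xy.1 ∪ xy.2, agreesAt f α A)
    (hgD : g ∈ dind chain Q D) : ¬ conflict (chainFDs chain) f g := by
  obtain ⟨hgDc, β, hβ, hβrel, xy₁, hxy₁, A₁, hA₁, hnag⟩ := Finset.mem_filter.1 hgD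
  have hβα : β = α := hsjf β hβ α hα (by rw [hβrel, hgr])
  subst hβα
  rw [Finset.mem_sdiff] at hgDc
  have hgc : ∀ xy ∈ primaryPrefix (chain β.rel) β,
      (∀ A ∈ xy.1, agreesAt g β A) → ∀ B ∈ xy.2, agreesAt g β B := by
    intro xy hxy hX B hB
    by_contra hc
    exact hgDc.2 (Finset.mem_filter.2 ⟨hgDc.1, β, hβ, hβrel, xy, hxy, hX, B, hB, hc⟩)
  exact no_conflict_good_ind hchain hf hgc ⟨xy₁, hxy₁, A₁, hA₁, hnag⟩ hfr

/-- Key Lemma 1: the repairs entailing `Q` are the same for `D` and `D \ dconf`. -/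
theorem repQ_eq_repQ_sdiff_dconf (hsjf : sjf Q) :
    repQ D (chainFDs chain) Q = repQ (D \ dconf chain Q D) (chainFDs chain) Q := by
  have key : ∀ E : Finset (DBFact Rel Attr Const), entails E Q → satFDs E (chainFDs chain) →
      ∀ f ∈ E, f ∉ dconf chain Q D := by
    rintro E ⟨h, hh⟩ hsat f hfE hfc
    obtain ⟨α, hαQ, hαrel, himp⟩ := dconf_conflict hfc
    have himg : applyHom h α ∈ E := hh α hαQ
    have hconf : conflict (chainFDs chain) (applyHom h α) f :=
      himp (applyHom h α) rfl (image_good h)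
    exact (satFDs_iff_conflict.1 hsat) _ himg f hfE hconf
  ext E
  unfold repQ
  simp only [Finset.mem_filter]
  constructor
  · rintro ⟨hE, hent⟩
    refine ⟨?_, hent⟩
    have hsub : E ⊆ D \ dconf chain Q D := by
      intro f hf
      exact Finset.mem_sdiff.2 ⟨(mem_rep.1 hE).1 hf, key E hent (mem_rep.1 hE).2.1 f hf⟩
    exact rep_anti hE hsub Finset.sdiff_subset
  · rintro ⟨hE, hent⟩
    refine ⟨?_, hent⟩
    rw [mem_rep] at hE ⊢
    obtain ⟨hEsub, hsat, hmax⟩ := hE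
    refine ⟨hEsub.trans Finset.sdiff_subset, hsat, fun F hEF hFD hsF => ?_⟩
    refine hmax F hEF (fun f hf => Finset.mem_sdiff.2 ⟨hFD hf, ?_⟩) hsF
    intro hfc
    obtain ⟨α, hαQ, hαrel, himp⟩ := dconf_conflict hfc
    obtain ⟨h, hh⟩ := hent
    have himg : applyHom h α ∈ F := hEF (hh α hαQ)
    exact (satFDs_iff_conflict.1 hsF) _ himg f hf
      (himp (applyHom h α) rfl (image_good h))

theorem PcD_subset (c : Const) : PcD chain Q x D c ⊆ DgD chain Q D :=
  Finset.filter_subset _ _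

theorem PcD_disjoint (hsjf : sjf Q)
    (hx : ∀ α ∈ compPart chain Q, x ∈ pvar (chain α.rel) α)
    {c c' : Const} (hne : c ≠ c') {f : DBFact Rel Attr Const}
    (hf : f ∈ PcD chain Q x D c) : f ∉ PcD chain Q x D c' := by
  intro hf'
  obtain ⟨_, α, hα, hαrel, hall⟩ := Finset.mem_filter.1 hf
  obtain ⟨_, α', hα', hα'rel, hall'⟩ := Finset.mem_filter.1 hf'
  have hαα' : α' = α := hsjf α' (Finset.mem_filter.1 hα').1 α (Finset.mem_filter.1 hα).1
    (by rw [hα'rel, hαrel])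
  rw [hαα'] at hall'
  obtain ⟨A, hApl, hAx⟩ := hx α hα
  exact hne ((hall A hApl hAx).symm.trans (hall' A hApl hAx))

/-- Separation of the part `PcD c` inside any ambient `X ⊆ D \ dconf`. -/
theorem PcD_sep (hchain : canonicalChain chain) (hsjf : sjf Q) (c : Const)
    {f g : DBFact Rel Attr Const} (hf : f ∈ PcD chain Q x D c)
    (hg : g ∈ D \ dconf chain Q D) (hgP : g ∉ PcD chain Q x D c) :
    ¬ conflict (chainFDs chain) f g := by
  obtain ⟨hfDg, α, hαc, hαrel, hfall⟩ := Finset.mem_filter.1 hf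
  have hαQ : α ∈ Q := (Finset.mem_filter.1 hαc).1
  rw [mem_DgD] at hfDg
  by_cases hrel : g.rel = α.rel
  case neg =>
    rintro ⟨φ, _, hfφ, hgφ, _⟩
    exact hrel (by rw [hgφ, ← hfφ, ← hαrel])
  case pos =>
  have hfgood := good_agrees hαQ hαrel hfDg.1 hfDg.2.1 hfDg.2.2
  rw [Finset.mem_sdiff] at hg
  by_cases hgi : g ∈ dind chain Q D
  · exact no_conflict_good_dind hchain hsjf hαQ hαrel.symm hrel hfgood hgi
  · have hgDg : g ∈ DgD chain Q D := mem_DgD.2 ⟨hg.1, hg.2, hgi⟩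
    have hggood := good_agrees hαQ (by rw [hrel]) hg.1 hg.2 hgi
    have hex : ∃ A₁ ∈ primaryLhs (chain α.rel) α, α.val A₁ = DBTerm.var x ∧ g.val A₁ ≠ c := by
      by_contra hc
      push_neg at hc
      exact hgP (Finset.mem_filter.2 ⟨hgDg, α, hαc, by rw [hrel, hαrel],
        fun A hA hAx => hc A hA hAx⟩)
    obtain ⟨A₁, hA₁pl, hA₁x, hA₁ne⟩ := hex
    obtain ⟨i, hidx⟩ := compPart_primaryIdx hαc
    have hfA₁ : f.val A₁ = c := hfall A₁ hA₁pl hA₁x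
    exact no_conflict_good_good hchain hidx hαrel.symm hfgood hggood hA₁pl
      (by rw [hfA₁]; exact fun hc => hA₁ne hc.symm)

/-- The image of a complex atom under the substituted homomorphism lands in `PcD c`. -/
theorem image_mem_PcD {α : DBAtom Rel Attr Var Const} (hαc : α ∈ compPart chain Q)
    (h : Var → Const) (c : Const)
    (hDg : applyHom h (substAtom x c α) ∈ DgD chain Q D) :
    applyHom h (substAtom x c α) ∈ PcD chain Q x D c := by
  refine Finset.mem_filter.2 ⟨hDg, α, hαc, rfl, fun A _ hAx => ?_⟩
  exact applyHom_val_const (substAtom_val_x hAx)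

end AuxSetting
section AuxCrux

variable {chain : Rel → List (Set Attr × Set Attr)} {Q : Finset (DBAtom Rel Attr Var Const)}
  {x : Var} {D : Finset (DBFact Rel Attr Const)}

theorem crux (hchain : canonicalChain chain) (hsjf : sjf Q)
    (hcomp : compPart chain Q ≠ ∅)
    (hx : ∀ α ∈ compPart chain Q, x ∈ pvar (chain α.rel) α)
    {X E : Finset (DBFact Rel Attr Const)} (hDgX : DgD chain Q D ⊆ X)
    (hXD : X ⊆ D \ dconf chain Q D) (hE : E ∈ rep X (chainFDs chain)) (c : Const) :
    entails E (substQ x c Q) ↔ PsiP chain Q x D c (E ∩ PcD chain Q x D c) := by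
  constructor
  · intro hent
    obtain ⟨h, hh⟩ := entails_substQ_iff.1 hent
    refine ⟨h, fun α hα => ?_⟩
    have himg : applyHom h (substAtom x c α) ∈ E := hh α hα
    have himgX : applyHom h (substAtom x c α) ∈ D \ dconf chain Q D :=
      hXD ((mem_rep.1 hE).1 himg)
    rw [Finset.mem_sdiff] at himgX
    have hnd := not_dconf_dind_of_agrees (D := D) hsjf hα rfl
      (image_subst_good (chain := chain) h x c)
    have hDg : applyHom h (substAtom x c α) ∈ DgD chain Q D :=
      mem_DgD.2 ⟨himgX.1, hnd.1, hnd.2⟩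
    exact ⟨fun hαc => Finset.mem_inter.2 ⟨himg, image_mem_PcD hαc h c hDg⟩, fun _ => hDg⟩
  · rintro ⟨h, hh⟩
    classical
    have huniq : ∀ v, ¬ liaison Q v → ∀ β₁ ∈ Q, ∀ β₂ ∈ Q, ∀ A₁ A₂,
        β₁.val A₁ = DBTerm.var v → β₂.val A₂ = DBTerm.var v → β₁ = β₂ ∧ A₁ = A₂ := by
      intro v hnl β₁ h₁ β₂ h₂ A₁ A₂ e₁ e₂
      by_cases hb : β₁ = β₂
      · by_cases ha : A₁ = A₂
        · exact ⟨hb, ha⟩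
        · exact absurd ⟨β₁, h₁, β₂, h₂, A₁, A₂, e₁, e₂, Or.inr ha⟩ hnl
      · exact absurd ⟨β₁, h₁, β₂, h₂, A₁, A₂, e₁, e₂, Or.inl hb⟩ hnl
    obtain ⟨α₀, hα₀c⟩ := Finset.nonempty_of_ne_empty hcomp
    obtain ⟨A₀, hA₀pl, hA₀x⟩ := hx α₀ hα₀c
    have hα₀Q : α₀ ∈ Q := (Finset.mem_filter.1 hα₀c).1
    have hxlia : ∀ β ∈ Q, β ∉ compPart chain Q → ∀ A, β.val A = DBTerm.var x →
        liaison Q x := by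
      intro β hβ hβnc A hA
      exact ⟨β, hβ, α₀, hα₀Q, A, A₀, hA, hA₀x, Or.inl (fun e => hβnc (e ▸ hα₀c))⟩
    have hpick : ∀ β, β ∈ Q → β ∉ compPart chain Q →
        ∃ fβ : DBFact Rel Attr Const, fβ ∈ E ∧ fβ.rel = β.rel ∧
          ∀ A, (∀ v, β.val A = DBTerm.var v → (liaison Q v ∨ v = x)) →
            fβ.val A = (applyHom h (substAtom x c β)).val A := by
      intro β hβ hβnc
      have hgβDg : applyHom h (substAtom x c β) ∈ DgD chain Q D := (hh β hβ).2 hβnc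
      have hBne : applyHom h (substAtom x c β) ∈ (DgD chain Q D).filter
          (fun f => f.rel = β.rel ∧ ∀ A,
            (∀ v, β.val A = DBTerm.var v → (liaison Q v ∨ v = x)) →
            f.val A = (applyHom h (substAtom x c β)).val A) :=
        Finset.mem_filter.2 ⟨hgβDg, rfl, fun A _ => rfl⟩
      have hsepB : ∀ f ∈ (DgD chain Q D).filter
          (fun f => f.rel = β.rel ∧ ∀ A,
            (∀ v, β.val A = DBTerm.var v → (liaison Q v ∨ v = x)) →
            f.val A = (applyHom h (substAtom x c β)).val A), ∀ g ∈ X,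
          g ∉ (DgD chain Q D).filter
          (fun f => f.rel = β.rel ∧ ∀ A,
            (∀ v, β.val A = DBTerm.var v → (liaison Q v ∨ v = x)) →
            f.val A = (applyHom h (substAtom x c β)).val A) →
          ¬ conflict (chainFDs chain) f g := by
        intro f hf g hg hgB
        obtain ⟨hfDg, hfrel, hfdet⟩ := Finset.mem_filter.1 hf
        by_cases hrel : g.rel = β.rel
        case neg =>
          rintro ⟨φ, _, hfφ, hgφ, _⟩
          exact hrel (by rw [hgφ, ← hfφ, hfrel])
        case pos =>
        have hgDc := hXD hg
        rw [Finset.mem_sdiff] at hgDc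
        rw [mem_DgD] at hfDg
        have hfgood := good_agrees hβ hfrel.symm hfDg.1 hfDg.2.1 hfDg.2.2
        by_cases hgi : g ∈ dind chain Q D
        · exact no_conflict_good_dind hchain hsjf hβ hfrel hrel hfgood hgi
        · have hgDg : g ∈ DgD chain Q D := mem_DgD.2 ⟨hgDc.1, hgDc.2, hgi⟩
          have hggood := good_agrees hβ hrel.symm hgDc.1 hgDc.2 hgi
          have hex : ∃ A₁, (∀ v, β.val A₁ = DBTerm.var v → (liaison Q v ∨ v = x)) ∧
              g.val A₁ ≠ (applyHom h (substAtom x c β)).val A₁ := by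
            by_contra hc
            push_neg at hc
            exact hgB (Finset.mem_filter.2 ⟨hgDg, hrel, fun A hdet => hc A hdet⟩)
          obtain ⟨A₁, hA₁det, hA₁ne⟩ := hex
          have hcases : A₁ ∈ primaryLhs (chain β.rel) β ∨
              ∃ xy ∈ primaryPrefix (chain β.rel) β, A₁ ∈ xy.1 ∪ xy.2 := by
            by_contra hcc
            push_neg at hcc
            apply hβnc
            refine Finset.mem_filter.2 ⟨hβ, A₁, hcc.1, ?_, fun xy hxy => hcc.2 xy hxy⟩
            cases hval : β.val A₁ with
            | const d => exact Or.inl ⟨d, rfl⟩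
            | var v =>
              rcases hA₁det v hval with hlia | hvx
              · exact Or.inr ⟨v, rfl, hlia⟩
              · rw [hvx] at hval
                exact Or.inr ⟨x, by rw [hvx], hxlia β hβ hβnc A₁ hval⟩
          rcases hcases with hpl | ⟨xy, hxy, hAu⟩
          · have hfA₁ : f.val A₁ = (applyHom h (substAtom x c β)).val A₁ := hfdet A₁ hA₁det
            have hfgne : f.val A₁ ≠ g.val A₁ := by
              rw [hfA₁]; exact fun e => hA₁ne e.symm
            cases hidx : primaryIdx (chain β.rel) β with
            | none => exact no_conflict_good_none hidx hfrel hfgood hggood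
            | some i => exact no_conflict_good_good hchain hidx hfrel hfgood hggood hpl hfgne
          · have h1 := hggood xy hxy A₁ hAu
            have h2 : agreesAt (applyHom h (substAtom x c β)) β A₁ :=
              image_subst_good h x c xy hxy A₁ hAu
            exact absurd (val_eq_of_agrees h1 h2) hA₁ne
      obtain ⟨fβ, hfβ⟩ := rep_inter_nonempty hE ((Finset.filter_subset _ _).trans hDgX)
        hsepB ⟨_, hBne⟩
      rw [Finset.mem_inter] at hfβ
      obtain ⟨hfβE, hfβB⟩ := hfβ
      obtain ⟨_, hfβrel, hfβdet⟩ := Finset.mem_filter.1 hfβB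
      exact ⟨fβ, hfβE, hfβrel, hfβdet⟩
    choose F hF1 hF2 hF3 using hpick
    set h' : Var → Const := fun v =>
      if hv : ∃ p : (DBAtom Rel Attr Var Const) × Attr, p.1 ∈ Q ∧ p.1 ∉ compPart chain Q ∧
          ¬ liaison Q v ∧ v ≠ x ∧ p.1.val p.2 = DBTerm.var v
      then (F hv.choose.1 hv.choose_spec.1 hv.choose_spec.2.1).val hv.choose.2
      else h v with hh'
    have hne' : ∀ v, (¬ ∃ p : (DBAtom Rel Attr Var Const) × Attr, p.1 ∈ Q ∧
        p.1 ∉ compPart chain Q ∧ ¬ liaison Q v ∧ v ≠ x ∧ p.1.val p.2 = DBTerm.var v) →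
        h' v = h v := by
      intro v hv
      rw [hh']
      exact dif_neg hv
    have hpos' : ∀ v (hv : ∃ p : (DBAtom Rel Attr Var Const) × Attr, p.1 ∈ Q ∧
        p.1 ∉ compPart chain Q ∧ ¬ liaison Q v ∧ v ≠ x ∧ p.1.val p.2 = DBTerm.var v),
        h' v = (F hv.choose.1 hv.choose_spec.1 hv.choose_spec.2.1).val hv.choose.2 := by
      intro v hv
      rw [hh']
      exact dif_pos hv
    have himg_nc : ∀ β (hβ : β ∈ Q) (hnc : β ∉ compPart chain Q),
        applyHom h' (substAtom x c β) = F β hβ hnc := by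
      intro β hβ hnc
      have hvals : ∀ A, (applyHom h' (substAtom x c β)).val A = (F β hβ hnc).val A := by
        intro A
        cases hval : β.val A with
        | const d =>
          rw [applyHom_val_const (substAtom_val_const hval),
            hF3 β hβ hnc A (fun v hv => nomatch (hval.symm.trans hv)),
            applyHom_val_const (substAtom_val_const hval)]
        | var v =>
          by_cases hvx : v = x
          · rw [hvx] at hval
            have hdet : ∀ v', β.val A = DBTerm.var v' → (liaison Q v' ∨ v' = x) :=
              fun v' hv' => Or.inr (DBTerm.var.inj (hval.symm.trans hv')).symm
            rw [applyHom_val_const (substAtom_val_x hval), hF3 β hβ hnc A hdet,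
              applyHom_val_const (substAtom_val_x hval)]
          · by_cases hlia : liaison Q v
            · have hdet : ∀ v', β.val A = DBTerm.var v' → (liaison Q v' ∨ v' = x) :=
                fun v' hv' => Or.inl ((DBTerm.var.inj (hval.symm.trans hv')) ▸ hlia)
              rw [applyHom_val_var (substAtom_val_var hvx hval), hF3 β hβ hnc A hdet,
                applyHom_val_var (substAtom_val_var hvx hval)]
              exact hne' v (fun ⟨p, _, _, h3, _, _⟩ => h3 hlia)
            · have hv : ∃ p : (DBAtom Rel Attr Var Const) × Attr, p.1 ∈ Q ∧
                  p.1 ∉ compPart chain Q ∧ ¬ liaison Q v ∧ v ≠ x ∧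
                  p.1.val p.2 = DBTerm.var v := ⟨(β, A), hβ, hnc, hlia, hvx, hval⟩
              rw [applyHom_val_var (substAtom_val_var hvx hval), hpos' v hv]
              obtain ⟨hq1, hq2, hq3, hq4, hq5⟩ := hv.choose_spec
              obtain ⟨e1, e2⟩ := huniq v hq3 hv.choose.1 hq1 β hβ hv.choose.2 A hq5 hval
              subst e2
              subst e1
              rfl
      exact dbfact_ext (hF2 β hβ hnc).symm hvals
    have himg_c : ∀ β, β ∈ Q → β ∈ compPart chain Q →
        applyHom h' (substAtom x c β) = applyHom h (substAtom x c β) := by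
      intro β hβ hβc
      have hvals : ∀ A, (applyHom h' (substAtom x c β)).val A
          = (applyHom h (substAtom x c β)).val A := by
        intro A
        cases hval : β.val A with
        | const d =>
          rw [applyHom_val_const (substAtom_val_const hval),
            applyHom_val_const (substAtom_val_const hval)]
        | var v =>
          by_cases hvx : v = x
          · rw [hvx] at hval
            rw [applyHom_val_const (substAtom_val_x hval),
              applyHom_val_const (substAtom_val_x hval)]
          · rw [applyHom_val_var (substAtom_val_var hvx hval),
              applyHom_val_var (substAtom_val_var hvx hval)]
            refine hne' v ?_
            rintro ⟨p, hp1, hp2, hp3, hp4, hp5⟩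
            obtain ⟨e1, e2⟩ := huniq v hp3 p.1 hp1 β hβ p.2 A hp5 hval
            exact hp2 (e1 ▸ hβc)
      exact dbfact_ext rfl hvals
    refine entails_substQ_iff.2 ⟨h', fun α hα => ?_⟩
    by_cases hαc : α ∈ compPart chain Q
    · rw [himg_c α hα hαc]
      exact (Finset.mem_inter.1 ((hh α hα).1 hαc)).1
    · rw [himg_nc α hα hαc]
      exact hF1 α hα hαc

end AuxCrux
section AuxFinal

theorem card_filter_congr' {α : Type*} {s : Finset α} {p q : α → Prop} {h1 : DecidablePred p}
    {h2 : DecidablePred q} (h : ∀ a ∈ s, p a ↔ q a) :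
    (@Finset.filter α p h1 s).card = (@Finset.filter α q h2 s).card := by
  have he : @Finset.filter α p h1 s = @Finset.filter α q h2 s := by
    ext a
    rw [Finset.mem_filter, Finset.mem_filter]
    constructor
    · rintro ⟨ha, hpa⟩; exact ⟨ha, (h a ha).1 hpa⟩
    · rintro ⟨ha, hqa⟩; exact ⟨ha, (h a ha).2 hqa⟩
  rw [he]

theorem filter_true' {α : Type*} {s : Finset α} {p : α → Prop} {h1 : DecidablePred p}
    (h : ∀ a ∈ s, p a) : @Finset.filter α p h1 s = s := by
  ext a
  rw [Finset.mem_filter]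
  exact ⟨fun ha => ha.1, fun ha => ⟨ha, h a ha⟩⟩

theorem card_filter_compl {α : Type*} {s : Finset α} {p q : α → Prop} {h1 : DecidablePred p}
    {h2 : DecidablePred q} (h : ∀ a ∈ s, p a ↔ ¬ q a) :
    (@Finset.filter α p h1 s).card = s.card - (@Finset.filter α q h2 s).card := by
  classical
  have he : @Finset.filter α p h1 s = s \ @Finset.filter α q h2 s := by
    ext a
    rw [Finset.mem_filter, Finset.mem_sdiff, Finset.mem_filter]
    constructor
    · rintro ⟨ha, hpa⟩
      exact ⟨ha, fun hc => (h a ha).1 hpa hc.2⟩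
    · rintro ⟨ha, hna⟩
      exact ⟨ha, (h a ha).2 (fun hq => hna ⟨ha, hq⟩)⟩
  rw [he, Finset.card_sdiff_of_subset (Finset.filter_subset _ _)]

end AuxFinal
theorem stmt_10' {Rel Attr Var Const : Type*} [Fintype Attr]
    (chain : Rel → List (Set Attr × Set Attr)) (hchain : canonicalChain chain)
    (Q : Finset (DBAtom Rel Attr Var Const)) (hQne : Q.Nonempty) (hsjf : sjf Q)
    (hcomp : compPart chain Q ≠ ∅)
    (x : Var) (hx : ∀ α ∈ compPart chain Q, x ∈ pvar (chain α.rel) α)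
    (D : Finset (DBFact Rel Attr Const)) :
    rfreq Q D (chainFDs chain) =
      (1 - ∏ c ∈ adom D,
        (1 - rfreq (substQ x c Q) (D \ (dconf chain Q D ∪ dind chain Q D))
              (chainFDs chain))) *
      (((rep (D \ dconf chain Q D) (chainFDs chain)).card : ℚ) /
        ((rep D (chainFDs chain)).card : ℚ)) := by
  classical
  obtain ⟨α₀, hα₀c⟩ := Finset.nonempty_of_ne_empty hcomp
  have hα₀Q : α₀ ∈ Q := mem_Q_of_mem_compPart hα₀c
  obtain ⟨A₀, hA₀pl, hA₀x⟩ := hx α₀ hα₀c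
  have hDgD' : DgD chain Q D ⊆ D \ dconf chain Q D := by
    intro f hf
    rw [mem_DgD] at hf
    exact Finset.mem_sdiff.2 ⟨hf.1, hf.2.1⟩
  have hsub' : ∀ c ∈ adom D, PcD chain Q x D c ⊆ D \ dconf chain Q D :=
    fun c _ => (PcD_subset c).trans hDgD'
  have hsubg : ∀ c ∈ adom D, PcD chain Q x D c ⊆ DgD chain Q D := fun c _ => PcD_subset c
  have hdisj : ∀ c ∈ adom D, ∀ c' ∈ adom D, c ≠ c' →
      ∀ f ∈ PcD chain Q x D c, f ∉ PcD chain Q x D c' :=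
    fun c _ c' _ hne f hf => PcD_disjoint hsjf hx hne hf
  have hsep' : ∀ c ∈ adom D, ∀ f ∈ PcD chain Q x D c, ∀ g ∈ D \ dconf chain Q D,
      g ∉ PcD chain Q x D c → ¬ conflict (chainFDs chain) f g :=
    fun c _ f hf g hg hgP => PcD_sep hchain hsjf c hf hg hgP
  have hsepg : ∀ c ∈ adom D, ∀ f ∈ PcD chain Q x D c, ∀ g ∈ DgD chain Q D,
      g ∉ PcD chain Q x D c → ¬ conflict (chainFDs chain) f g :=
    fun c hc f hf g hg hgP => hsep' c hc f hf g (hDgD' hg) hgP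
  -- (A) the factorization of |rep (D \ dconf)|
  have hA : (rep (D \ dconf chain Q D) (chainFDs chain)).card
      = (∏ c ∈ adom D, (rep (PcD chain Q x D c) (chainFDs chain)).card) *
        (rep ((D \ dconf chain Q D) \ (adom D).biUnion (PcD chain Q x D))
          (chainFDs chain)).card := by
    have h := card_rep_parts (S := chainFDs chain) (PcD chain Q x D) (fun _ _ => True)
      (adom D) (D \ dconf chain Q D) hsub' hdisj hsep'
    rw [filter_true' (fun _ _ => fun _ _ => trivial)] at h
    rw [h]
    congr 1
    apply Finset.prod_congr rfl
    intro c hc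
    rw [filter_true' (fun _ _ => trivial)]
  -- (B) the count of repairs not entailing the query
  have hB : ((rep (D \ dconf chain Q D) (chainFDs chain)).filter
        (fun E => ∀ c ∈ adom D, ¬ PsiP chain Q x D c (E ∩ PcD chain Q x D c))).card
      = (∏ c ∈ adom D, ((rep (PcD chain Q x D c) (chainFDs chain)).card
            - ((rep (PcD chain Q x D c) (chainFDs chain)).filter
                (PsiP chain Q x D c)).card)) *
        (rep ((D \ dconf chain Q D) \ (adom D).biUnion (PcD chain Q x D))
          (chainFDs chain)).card := by
    have h := card_rep_parts (S := chainFDs chain) (PcD chain Q x D)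
      (fun c ω => ¬ PsiP chain Q x D c ω) (adom D) (D \ dconf chain Q D) hsub' hdisj hsep'
    refine (card_filter_congr' (fun E _ => Iff.rfl)).trans (h.trans ?_)
    congr 1
    apply Finset.prod_congr rfl
    intro c hc
    exact card_filter_compl (fun ω _ => Iff.rfl)
  -- (C) the entailing repairs of D \ dconf
  have hC1 : ∀ E ∈ rep (D \ dconf chain Q D) (chainFDs chain),
      entails E Q ↔ ∃ c ∈ adom D, PsiP chain Q x D c (E ∩ PcD chain Q x D c) := by
    intro E hE
    rw [entails_iff_exists_subst (D := D)
      ((mem_rep.1 hE).1.trans Finset.sdiff_subset) hα₀Q hA₀x]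
    constructor
    · rintro ⟨c, hc, hent⟩
      exact ⟨c, hc, (crux hchain hsjf hcomp hx hDgD' subset_rfl hE c).1 hent⟩
    · rintro ⟨c, hc, hpsi⟩
      exact ⟨c, hc, (crux hchain hsjf hcomp hx hDgD' subset_rfl hE c).2 hpsi⟩
  have hCc : (repQ (D \ dconf chain Q D) (chainFDs chain) Q).card
      = (rep (D \ dconf chain Q D) (chainFDs chain)).card
        - ((rep (D \ dconf chain Q D) (chainFDs chain)).filter
            (fun E => ∀ c ∈ adom D, ¬ PsiP chain Q x D c (E ∩ PcD chain Q x D c))).card := by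
    unfold repQ
    refine card_filter_compl ?_
    intro E hE
    rw [hC1 E hE]
    simp only [not_forall, Classical.not_imp, not_not, exists_prop]
  -- (E) the value of rfreq for the substituted query
  have hEc : ∀ c ∈ adom D,
      rfreq (substQ x c Q) (D \ (dconf chain Q D ∪ dind chain Q D)) (chainFDs chain)
        = (((rep (PcD chain Q x D c) (chainFDs chain)).filter (PsiP chain Q x D c)).card : ℚ)
          / ((rep (PcD chain Q x D c) (chainFDs chain)).card : ℚ) := by
    intro c hc
    have hXeq : D \ (dconf chain Q D ∪ dind chain Q D) = DgD chain Q D := rfl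
    rw [hXeq]
    unfold rfreq
    have hnum : (repQ (DgD chain Q D) (chainFDs chain) (substQ x c Q)).card
        = ((rep (PcD chain Q x D c) (chainFDs chain)).filter (PsiP chain Q x D c)).card
          * (rep (DgD chain Q D \ PcD chain Q x D c) (chainFDs chain)).card := by
      unfold repQ
      have h := card_rep_split (S := chainFDs chain) (hsubg c hc)
        (fun f hf g hg hgP => hsepg c hc f hf g hg hgP)
        (PsiP chain Q x D c) (fun _ => True)
      refine Eq.trans (card_filter_congr' ?_) (h.trans ?_)
      · intro E hE
        rw [crux hchain hsjf hcomp hx subset_rfl hDgD' hE c]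
        exact (and_iff_left trivial).symm
      · congr 1
        rw [filter_true' (fun _ _ => trivial)]
    have hden : (rep (DgD chain Q D) (chainFDs chain)).card
        = (rep (PcD chain Q x D c) (chainFDs chain)).card
          * (rep (DgD chain Q D \ PcD chain Q x D c) (chainFDs chain)).card := by
      have h := card_rep_split (S := chainFDs chain) (hsubg c hc)
        (fun f hf g hg hgP => hsepg c hc f hf g hg hgP)
        (fun _ => True) (fun _ => True)
      refine Eq.trans ?_ (h.trans ?_)
      · exact (congrArg Finset.card (filter_true' (fun _ _ => ⟨trivial, trivial⟩))).symm
      · rw [filter_true' (fun _ _ => trivial), filter_true' (fun _ _ => trivial)]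
    rw [hnum, hden]
    have hu : ((rep (DgD chain Q D \ PcD chain Q x D c) (chainFDs chain)).card : ℚ) ≠ 0 :=
      Nat.cast_ne_zero.2 (rep_card_pos _ _).ne'
    push_cast
    rw [mul_div_mul_right _ _ hu]
  -- rewrite the product
  have hprod : (∏ c ∈ adom D,
        (1 - rfreq (substQ x c Q) (D \ (dconf chain Q D ∪ dind chain Q D))
          (chainFDs chain)))
      = ∏ c ∈ adom D,
        (1 - (((rep (PcD chain Q x D c) (chainFDs chain)).filter
              (PsiP chain Q x D c)).card : ℚ)
          / ((rep (PcD chain Q x D c) (chainFDs chain)).card : ℚ)) :=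
    Finset.prod_congr rfl (fun c hc => by rw [hEc c hc])
  rw [hprod]
  unfold rfreq
  rw [repQ_eq_repQ_sdiff_dconf hsjf]
  -- now pure arithmetic
  have hrpos : ∀ c ∈ adom D, 0 < ((rep (PcD chain Q x D c) (chainFDs chain)).card : ℚ) :=
    fun c _ => by exact_mod_cast rep_card_pos _ _
  have hνle : ∀ c ∈ adom D,
      ((rep (PcD chain Q x D c) (chainFDs chain)).filter (PsiP chain Q x D c)).card
        ≤ (rep (PcD chain Q x D c) (chainFDs chain)).card :=
    fun c _ => Finset.card_filter_le _ _
  have hBle : ((rep (D \ dconf chain Q D) (chainFDs chain)).filter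
        (fun E => ∀ c ∈ adom D, ¬ PsiP chain Q x D c (E ∩ PcD chain Q x D c))).card
      ≤ (rep (D \ dconf chain Q D) (chainFDs chain)).card :=
    Finset.card_filter_le _ _
  have hprod2 : ∏ c ∈ adom D,
        (1 - (((rep (PcD chain Q x D c) (chainFDs chain)).filter
            (PsiP chain Q x D c)).card : ℚ)
          / ((rep (PcD chain Q x D c) (chainFDs chain)).card : ℚ))
      = (∏ c ∈ adom D, (((rep (PcD chain Q x D c) (chainFDs chain)).card : ℚ)
          - (((rep (PcD chain Q x D c) (chainFDs chain)).filter
              (PsiP chain Q x D c)).card : ℚ)))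
        / (∏ c ∈ adom D, ((rep (PcD chain Q x D c) (chainFDs chain)).card : ℚ)) := by
    rw [← Finset.prod_div_distrib]
    apply Finset.prod_congr rfl
    intro c hc
    rw [one_sub_div (hrpos c hc).ne']
  rw [hprod2]
  have hRne : (∏ c ∈ adom D, ((rep (PcD chain Q x D c) (chainFDs chain)).card : ℚ)) ≠ 0 :=
    (Finset.prod_pos hrpos).ne'
  -- cast the counting identities to ℚ
  have hAq : ((rep (D \ dconf chain Q D) (chainFDs chain)).card : ℚ)
      = (∏ c ∈ adom D, ((rep (PcD chain Q x D c) (chainFDs chain)).card : ℚ))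
        * ((rep ((D \ dconf chain Q D) \ (adom D).biUnion (PcD chain Q x D))
            (chainFDs chain)).card : ℚ) := by
    rw [hA]
    push_cast
    ring
  have hBq : (((rep (D \ dconf chain Q D) (chainFDs chain)).filter
        (fun E => ∀ c ∈ adom D, ¬ PsiP chain Q x D c (E ∩ PcD chain Q x D c))).card : ℚ)
      = (∏ c ∈ adom D, (((rep (PcD chain Q x D c) (chainFDs chain)).card : ℚ)
          - (((rep (PcD chain Q x D c) (chainFDs chain)).filter
              (PsiP chain Q x D c)).card : ℚ)))
        * ((rep ((D \ dconf chain Q D) \ (adom D).biUnion (PcD chain Q x D))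
            (chainFDs chain)).card : ℚ) := by
    rw [hB]
    push_cast
    congr 1
    apply Finset.prod_congr rfl
    intro c hc
    rw [Nat.cast_sub (hνle c hc)]
  have hCq : ((repQ (D \ dconf chain Q D) (chainFDs chain) Q).card : ℚ)
      = ((rep (D \ dconf chain Q D) (chainFDs chain)).card : ℚ)
        - (((rep (D \ dconf chain Q D) (chainFDs chain)).filter
            (fun E => ∀ c ∈ adom D, ¬ PsiP chain Q x D c (E ∩ PcD chain Q x D c))).card : ℚ) := by
    rw [hCc, Nat.cast_sub hBle]
  rw [← mul_div_assoc]
  congr 1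
  rw [hCq, hBq, hAq]
  field_simp
/-- For a canonical set of FDs with an LHS chain and an SJFCQ `Q` with nonempty complex
part, if the variable `x` occurs at a primary-lhs position of every atom of the complex
part, then `rfreq(Q,D,Σ) = (1 − ∏_{c ∈ adom(D)} (1 − rfreq(Q_{x↦c}, D^{Σ,Q}, Σ))) ×
(|rep(D \ D_conf,Σ)| / |rep(D,Σ)|)`. -/
theorem stmt_10 {Rel Attr Var Const : Type*} [Fintype Attr]
    (chain : Rel → List (Set Attr × Set Attr)) (hchain : canonicalChain chain)
    (Q : Finset (DBAtom Rel Attr Var Const)) (hQne : Q.Nonempty) (hsjf : sjf Q)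
    (hcomp : compPart chain Q ≠ ∅)
    (x : Var) (hx : ∀ α ∈ compPart chain Q, x ∈ pvar (chain α.rel) α)
    (D : Finset (DBFact Rel Attr Const)) :
    rfreq Q D (chainFDs chain) =
      (1 - ∏ c ∈ adom D,
        (1 - rfreq (substQ x c Q) (D \ (dconf chain Q D ∪ dind chain Q D))
              (chainFDs chain))) *
      (((rep (D \ dconf chain Q D) (chainFDs chain)).card : ℚ) /
        ((rep D (chainFDs chain)).card : ℚ)) := by
  exact stmt_10' chain hchain Q hQne hsjf hcomp x hx D
end

section
/- Consider a database D, a canonical set Σ of FDs with an LHS chain, and an SJFCQ Q. Suppose there exists an R-atom α ∈ comp(Q,Σ) with pvar(α,Σ) = ∅ and a variable x occurring in α at a position (R,A) with A ∈ Y, where R:X→Y is the primary FD of Σ_R w.r.t. Q. Then rfreq(Q, D, Σ) = Σ_{c ∈ adom(D)} rfreq(Q_{x↦c}, D, Σ). -/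
open scoped Classical

variable {Rel Attr Var Const : Type*}

section Aux
variable {Rel Attr Var Const : Type*}

lemma applyHom_val (h : Var → Const) (β : DBAtom Rel Attr Var Const) (B : Attr) :
    (applyHom h β).val B = match β.val B with
      | DBTerm.var v => h v
      | DBTerm.const d => d := rfl

lemma applyHom_substAtom (h : Var → Const) (x : Var) (c : Const)
    (hx : h x = c) (β : DBAtom Rel Attr Var Const) :
    applyHom h (substAtom x c β) = applyHom h β := by
  have : ∀ B, (applyHom h (substAtom x c β)).val B = (applyHom h β).val B := by
    intro B
    rw [applyHom_val, applyHom_val]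
    show (match substTerm x c (β.val B) with
      | DBTerm.var v => h v | DBTerm.const d => d) = _
    cases hb : β.val B with
    | var v =>
      by_cases hv : v = x
      · subst hv; simp [substTerm, hx]
      · simp [substTerm, hv]
    | const d => simp [substTerm]
  cases hfa : applyHom h (substAtom x c β) with
  | mk r v =>
    cases hfb : applyHom h β with
    | mk r' v' =>
      have hr : r = r' := by
        have : (applyHom h (substAtom x c β)).rel = (applyHom h β).rel := rfl
        rw [hfa, hfb] at this; exact this
      have hvv : v = v' := by
        funext B
        have := this B
        rw [hfa, hfb] at this; exact this
      rw [hr, hvv]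

lemma entails_substQ (E : Finset (DBFact Rel Attr Const))
    (Q : Finset (DBAtom Rel Attr Var Const)) (x : Var) (c : Const) :
    entails E (substQ x c Q) ↔
      ∃ h : Var → Const, h x = c ∧ ∀ β ∈ Q, applyHom h β ∈ E := by
  constructor
  · rintro ⟨h, hh⟩
    refine ⟨fun v => if v = x then c else h v, by simp, fun β hβ => ?_⟩
    have h1 : applyHom (fun v => if v = x then c else h v) β
        = applyHom h (substAtom x c β) := by
      have key : ∀ B, (applyHom (fun v => if v = x then c else h v) β).val B
          = (applyHom h (substAtom x c β)).val B := by
        intro B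
        rw [applyHom_val, applyHom_val]
        show _ = (match substTerm x c (β.val B) with
          | DBTerm.var v => h v | DBTerm.const d => d)
        cases hb : β.val B with
        | var v =>
          by_cases hv : v = x
          · subst hv; simp [substTerm]
          · simp [substTerm, hv]
        | const d => simp [substTerm]
      cases hfa : applyHom (fun v => if v = x then c else h v) β with
      | mk r v =>
        cases hfb : applyHom h (substAtom x c β) with
        | mk r' v' =>
          have hr : r = r' := by
            have : (applyHom (fun v => if v = x then c else h v) β).rel
                = (applyHom h (substAtom x c β)).rel := rfl
            rw [hfa, hfb] at this; exact this
          have hvv : v = v' := by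
            funext B
            have := key B
            rw [hfa, hfb] at this; exact this
          rw [hr, hvv]
    rw [h1]
    exact hh _ (Finset.mem_image_of_mem _ hβ)
  · rintro ⟨h, hx, hh⟩
    refine ⟨h, fun β hβ => ?_⟩
    simp only [substQ, Finset.mem_image] at hβ
    obtain ⟨γ, hγ, rfl⟩ := hβ
    rw [applyHom_substAtom h x c hx]
    exact hh γ hγ

end Aux

/-- For a canonical set of FDs with an LHS chain and an SJFCQ `Q`: if some atom
`α ∈ comp(Q,Σ)` has `pvar(α,Σ) = ∅` and a variable `x` at a position `(R,A)` with
`A ∈ Y`, where `R:X→Y` is the primary FD of `Σ_R` w.r.t. `Q`, then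
`rfreq(Q,D,Σ) = ∑_{c ∈ adom(D)} rfreq(Q_{x↦c},D,Σ)`. -/
theorem stmt_11 {Rel Attr Var Const : Type*} [Fintype Attr]
    (chain : Rel → List (Set Attr × Set Attr)) (hchain : canonicalChain chain)
    (Q : Finset (DBAtom Rel Attr Var Const)) (hQne : Q.Nonempty) (hsjf : sjf Q)
    (α : DBAtom Rel Attr Var Const) (hα : α ∈ compPart chain Q)
    (hpvar : pvar (chain α.rel) α = ∅)
    (x : Var) (A : Attr) (X Y : Set Attr)
    (hprim : primaryFD (chain α.rel) α = some (X, Y))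
    (hxA : α.val A = DBTerm.var x) (hAY : A ∈ Y)
    (D : Finset (DBFact Rel Attr Const)) :
    rfreq Q D (chainFDs chain) =
      ∑ c ∈ adom D, rfreq (substQ x c Q) D (chainFDs chain) := by

  have hαQ : α ∈ Q := by
    have key : ∀ (p : DBAtom Rel Attr Var Const → Prop) (_ : DecidablePred p),
        α ∈ Q.filter p → α ∈ Q := fun p inst h => Finset.mem_of_mem_filter α h
    exact key _ _ hα
  set S := chainFDs chain with hS
  -- (X, Y) is an FD of the chain
  have hXYmem : (X, Y) ∈ chain α.rel := by
    unfold primaryFD at hprim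
    cases h : primaryIdx (chain α.rel) α with
    | none => rw [h] at hprim; exact absurd hprim (by simp)
    | some i =>
      rw [h] at hprim
      rw [Option.bind_some] at hprim
      exact List.mem_of_getElem? hprim
  have hFD : (⟨α.rel, X, Y⟩ : DBFD Rel Attr) ∈ S := ⟨(X, Y), hXYmem, rfl, rfl⟩
  -- all X-positions of α carry constants
  have hXconst : ∀ B ∈ X, ∃ d, α.val B = DBTerm.const d := by
    intro B hB
    cases hb : α.val B with
    | var v =>
      exfalso
      have hv : v ∈ pvar (chain α.rel) α := by
        refine ⟨B, ?_, hb⟩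
        unfold primaryLhs
        rw [hprim]
        exact hB
      rw [hpvar] at hv
      exact hv
    | const d => exact ⟨d, rfl⟩
  have hvalA : ∀ (h : Var → Const), (applyHom h α).val A = h x := by
    intro h
    rw [applyHom_val, hxA]
  -- the main cardinality identity
  have hcard : (repQ D S Q).card
      = ∑ c ∈ adom D, (repQ D S (substQ x c Q)).card := by
    rw [← Finset.card_biUnion]
    · congr 1
      ext E
      simp only [Finset.mem_biUnion]
      constructor
      · intro hE
        obtain ⟨hErep, h, hh⟩ := Finset.mem_filter.mp hE
        have hED : E ⊆ D := by
          have := (Finset.mem_filter.mp hErep).1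
          exact Finset.mem_powerset.mp this
        have hfE : applyHom h α ∈ E := hh α hαQ
        refine ⟨h x, ?_, ?_⟩
        · refine Finset.mem_biUnion.mpr ⟨applyHom h α, hED hfE, ?_⟩
          exact Finset.mem_image.mpr ⟨A, Finset.mem_univ A, hvalA h⟩
        · exact Finset.mem_filter.mpr ⟨hErep,
            (entails_substQ E Q x (h x)).mpr ⟨h, rfl, hh⟩⟩
      · rintro ⟨c, _, hE⟩
        obtain ⟨hErep, hent⟩ := Finset.mem_filter.mp hE
        obtain ⟨h, _, hh⟩ := (entails_substQ E Q x c).mp hent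
        exact Finset.mem_filter.mpr ⟨hErep, h, hh⟩
    · intro c _ c' _ hne
      rw [Function.onFun, Finset.disjoint_left]
      intro E hEc hEc'
      obtain ⟨hErep, hent⟩ := Finset.mem_filter.mp hEc
      obtain ⟨_, hent'⟩ := Finset.mem_filter.mp hEc'
      obtain ⟨h, hhx, hh⟩ := (entails_substQ E Q x c).mp hent
      obtain ⟨h', hhx', hh'⟩ := (entails_substQ E Q x c').mp hent'
      have hsat : satFDs E S := by
        have := (Finset.mem_filter.mp hErep).2
        exact this.2.1
      have hsatFD := hsat _ hFD
      have hfE : applyHom h α ∈ E := hh α hαQ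
      have hfE' : applyHom h' α ∈ E := hh' α hαQ
      have hagree : ∀ B ∈ X, (applyHom h α).val B = (applyHom h' α).val B := by
        intro B hB
        obtain ⟨d, hd⟩ := hXconst B hB
        rw [applyHom_val, applyHom_val, hd]
      have := hsatFD _ hfE _ hfE' rfl rfl hagree A hAY
      rw [hvalA h, hvalA h', hhx, hhx'] at this
      exact hne this
  unfold rfreq
  rw [hcard]
  push_cast
  rw [Finset.sum_div]
end

section
/- There exist a set Σ of FDs with an LHS chain over a single 4-ary relation name, a Boolean CQ Q consisting of a single atom, and a family of databases (D_n)_{n>0} such that for every n > 0, |D_n| = 2n + 1 and rfreq(Q, D_n, Σ) = 1/(2^n + 1). Concretely, one may take Σ = {R: A₁ → A₂, R: {A₁, A₃} → A₄} over a relation name R with attributes (A₁,A₂,A₃,A₄), Q = {R(x,x,y,z)} for variables x, y, z, and D_n = {R(a,a,a,a)} ∪ {R(a,b,c_i,d₁), R(a,b,c_i,d₂) : i ∈ [n]}, where a, b, d₁, d₂ and c₁,…,c_n are pairwise distinct constants. -/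
open scoped Classical

variable {Rel Attr Var Const : Type*}

/-- Constants for the concrete example: `a`, `b`, `d₁`, `d₂` and `c i` for `i : ℕ`,
pairwise distinct. -/
inductive C17 where
  | a | b | d1 | d2
  | c : ℕ → C17

/-- The FD set `Σ = {R : A₁ → A₂, R : {A₁,A₃} → A₄}` over the single 4-ary relation
name, with attributes `A₁,…,A₄` modelled as `0,…,3 : Fin 4`. -/
def sigma17 : Set (DBFD Unit (Fin 4)) :=
  {⟨(), {0}, {1}⟩, ⟨(), {0, 2}, {3}⟩}

/-- The query `Q = {R(x,x,y,z)}`, consisting of a single atom (variables `x,y,z`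
modelled as `0,1,2 : Fin 3`). -/
def q17 : Finset (DBAtom Unit (Fin 4) (Fin 3) C17) :=
  {⟨(), ![DBTerm.var 0, DBTerm.var 0, DBTerm.var 1, DBTerm.var 2]⟩}

/-- The fact `R(u,v,w,z)`. -/
def fct17 (u v w z : C17) : DBFact Unit (Fin 4) C17 :=
  ⟨(), ![u, v, w, z]⟩

/-- The database `D_n = {R(a,a,a,a)} ∪ {R(a,b,cᵢ,d₁), R(a,b,cᵢ,d₂) : i ∈ [n]}`. -/
noncomputable def D17 (n : ℕ) : Finset (DBFact Unit (Fin 4) C17) :=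
  insert (fct17 C17.a C17.a C17.a C17.a)
    ((Finset.range n).biUnion fun i =>
      {fct17 C17.a C17.b (C17.c i) C17.d1, fct17 C17.a C17.b (C17.c i) C17.d2})

namespace Stmt17Aux

abbrev F := DBFact Unit (Fin 4) C17

noncomputable def f0 : F := fct17 C17.a C17.a C17.a C17.a
noncomputable def gg (i : ℕ) : F := fct17 C17.a C17.b (C17.c i) C17.d1
noncomputable def hh (i : ℕ) : F := fct17 C17.a C17.b (C17.c i) C17.d2

@[simp] lemma fct_val0 (u v w z : C17) : (fct17 u v w z).val 0 = u := rfl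
@[simp] lemma fct_val1 (u v w z : C17) : (fct17 u v w z).val 1 = v := rfl
@[simp] lemma fct_val2 (u v w z : C17) : (fct17 u v w z).val 2 = w := rfl
@[simp] lemma fct_val3 (u v w z : C17) : (fct17 u v w z).val 3 = z := rfl

lemma fct17_inj {u v w z u' v' w' z' : C17} :
    fct17 u v w z = fct17 u' v' w' z' ↔ u = u' ∧ v = v' ∧ w = w' ∧ z = z' := by
  constructor
  · intro h
    exact ⟨congrArg (fun f => DBFact.val f 0) h, congrArg (fun f => DBFact.val f 1) h,
      congrArg (fun f => DBFact.val f 2) h, congrArg (fun f => DBFact.val f 3) h⟩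
  · rintro ⟨rfl, rfl, rfl, rfl⟩; rfl

@[simp] lemma gg_ne_f0 (i : ℕ) : gg i ≠ f0 := by
  simp [gg, f0, fct17_inj]
@[simp] lemma hh_ne_f0 (i : ℕ) : hh i ≠ f0 := by
  simp [hh, f0, fct17_inj]
@[simp] lemma gg_ne_hh (i j : ℕ) : gg i ≠ hh j := by
  simp [gg, hh, fct17_inj]
@[simp] lemma gg_inj {i j : ℕ} : gg i = gg j ↔ i = j := by
  simp [gg, fct17_inj]
@[simp] lemma hh_inj {i j : ℕ} : hh i = hh j ↔ i = j := by
  simp [hh, fct17_inj]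

lemma mem_D17 {n : ℕ} {f : F} :
    f ∈ D17 n ↔ f = f0 ∨ ∃ i < n, f = gg i ∨ f = hh i := by
  simp [D17, f0, gg, hh]

def fd1 : DBFD Unit (Fin 4) := ⟨(), {0}, {1}⟩
def fd2 : DBFD Unit (Fin 4) := ⟨(), {0, 2}, {3}⟩

lemma fd1_mem : fd1 ∈ sigma17 := Or.inl rfl
lemma fd2_mem : fd2 ∈ sigma17 := Or.inr rfl

lemma sat_iff {n : ℕ} {E : Finset F} (hE : E ⊆ D17 n) :
    satFDs E sigma17 ↔
      ∀ i, (f0 ∈ E → gg i ∉ E) ∧ (f0 ∈ E → hh i ∉ E) ∧ (gg i ∈ E → hh i ∉ E) := by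
  constructor
  · intro hsat i
    refine ⟨fun h1 h2 => ?_, fun h1 h2 => ?_, fun h1 h2 => ?_⟩
    · have := hsat fd1 fd1_mem f0 h1 (gg i) h2 rfl rfl
        (by intro A hA; rcases hA with rfl; rfl) 1 rfl
      simp [f0, gg] at this
    · have := hsat fd1 fd1_mem f0 h1 (hh i) h2 rfl rfl
        (by intro A hA; rcases hA with rfl; rfl) 1 rfl
      simp [f0, hh] at this
    · have := hsat fd2 fd2_mem (gg i) h1 (hh i) h2 rfl rfl
        (by intro A hA; rcases hA with rfl | rfl <;> rfl) 3 rfl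
      simp [gg, hh] at this
  · intro H φ hφ f hf g hg _ _ hagree A hA
    rcases hE hf |> mem_D17.mp with rfl | ⟨i, hi, rfl | rfl⟩ <;>
      rcases hE hg |> mem_D17.mp with rfl | ⟨j, hj, rfl | rfl⟩ <;>
      rcases hφ with rfl | rfl <;> rcases hA with rfl | rfl <;>
      first
        | rfl
        | (exfalso; first
            | exact (H i).1 hf hg
            | exact (H i).2.1 hf hg
            | exact (H j).1 hg hf
            | exact (H j).2.1 hg hf
            | exact (H j).1 hf hg
            | exact (H j).2.1 hf hg
            | exact (H i).1 hg hf
            | exact (H i).2.1 hg hf)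
        | (have h2 := hagree 2 (by simp);
           simp only [f0, gg, hh, fct_val2] at h2 <;> first
             | (exact C17.noConfusion h2)
             | exact absurd hg ((H i).2.2 hf)
             | exact absurd hf ((H i).2.2 hg)
             | (obtain rfl : i = j := C17.c.injEq .. ▸ h2; first
                 | rfl
                 | exact absurd hg ((H i).2.2 hf)
                 | exact absurd hf ((H i).2.2 hg)))

noncomputable def choiceRep (n : ℕ) (s : Finset ℕ) : Finset F :=
  (Finset.range n).image (fun i => if i ∈ s then gg i else hh i)

lemma gg_mem_choiceRep {n : ℕ} {s : Finset ℕ} {i : ℕ} :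
    gg i ∈ choiceRep n s ↔ i < n ∧ i ∈ s := by
  simp only [choiceRep, Finset.mem_image, Finset.mem_range]
  constructor
  · rintro ⟨j, hj, hf⟩
    by_cases h : j ∈ s
    · simp only [h, if_true] at hf
      obtain rfl := gg_inj.mp hf
      exact ⟨hj, h⟩
    · simp only [h, if_false] at hf
      exact absurd hf.symm (gg_ne_hh i j)
  · rintro ⟨hi, hs⟩; exact ⟨i, hi, by simp [hs]⟩

lemma hh_mem_choiceRep {n : ℕ} {s : Finset ℕ} {i : ℕ} :
    hh i ∈ choiceRep n s ↔ i < n ∧ i ∉ s := by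
  simp only [choiceRep, Finset.mem_image, Finset.mem_range]
  constructor
  · rintro ⟨j, hj, hf⟩
    by_cases h : j ∈ s
    · simp only [h, if_true] at hf
      exact absurd hf (gg_ne_hh j i)
    · simp only [h, if_false] at hf
      obtain rfl := hh_inj.mp hf
      exact ⟨hj, h⟩
  · rintro ⟨hi, hs⟩; exact ⟨i, hi, by simp [hs]⟩

lemma f0_notMem_choiceRep {n : ℕ} {s : Finset ℕ} : f0 ∉ choiceRep n s := by
  simp only [choiceRep, Finset.mem_image, Finset.mem_range]
  rintro ⟨j, hj, hf⟩
  by_cases h : j ∈ s <;> simp [h] at hf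

lemma choiceRep_subset {n : ℕ} {s : Finset ℕ} : choiceRep n s ⊆ D17 n := by
  intro f hf
  simp only [choiceRep, Finset.mem_image, Finset.mem_range] at hf
  obtain ⟨j, hj, rfl⟩ := hf
  by_cases h : j ∈ s <;> simp only [h, if_true, if_false] <;>
    exact mem_D17.mpr (Or.inr ⟨j, hj, by simp⟩)

lemma f0_mem_D17 {n : ℕ} : f0 ∈ D17 n := mem_D17.mpr (Or.inl rfl)

lemma isRepair_iff {n : ℕ} (hn : 0 < n) {E : Finset F} :
    isRepair sigma17 (D17 n) E ↔ E = {f0} ∨ ∃ s ⊆ Finset.range n, E = choiceRep n s := by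
  constructor
  · rintro ⟨hsub, hsat, hmax⟩
    have H := (sat_iff hsub).mp hsat
    by_cases h0 : f0 ∈ E
    · left
      apply Finset.Subset.antisymm
      · intro f hf
        rcases mem_D17.mp (hsub hf) with rfl | ⟨i, hi, rfl | rfl⟩
        · exact Finset.mem_singleton_self f0
        · exact absurd hf ((H i).1 h0)
        · exact absurd hf ((H i).2.1 h0)
      · simpa using h0
    · right
      refine ⟨(Finset.range n).filter (fun i => gg i ∈ E), Finset.filter_subset _ _, ?_⟩
      apply Finset.Subset.antisymm
      · intro f hf
        rcases mem_D17.mp (hsub hf) with rfl | ⟨i, hi, rfl | rfl⟩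
        · exact absurd hf h0
        · exact gg_mem_choiceRep.mpr ⟨hi, by simp [Finset.mem_filter, hi, hf]⟩
        · refine hh_mem_choiceRep.mpr ⟨hi, ?_⟩
          simp only [Finset.mem_filter, Finset.mem_range]
          rintro ⟨-, hgg⟩
          exact (H i).2.2 hgg hf
      · intro f hf
        simp only [choiceRep, Finset.mem_image, Finset.mem_range] at hf
        obtain ⟨i, hi, rfl⟩ := hf
        by_cases hc : i ∈ (Finset.range n).filter (fun i => gg i ∈ E)
        · simp only [hc, if_true]
          exact (Finset.mem_filter.mp hc).2
        · simp only [hc, if_false]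
          -- show hh i ∈ E by maximality
          have hgg : gg i ∉ E := by
            intro hgg
            exact hc (Finset.mem_filter.mpr ⟨Finset.mem_range.mpr hi, hgg⟩)
          by_contra hne
          have hsub' : insert (hh i) E ⊆ D17 n := by
            intro x hx
            rcases Finset.mem_insert.mp hx with rfl | hx
            · exact mem_D17.mpr (Or.inr ⟨i, hi, Or.inr rfl⟩)
            · exact hsub hx
          have hsat' : satFDs (insert (hh i) E) sigma17 := by
            rw [sat_iff hsub']
            intro k
            have hf0 : f0 ∉ insert (hh i) E := by
              simp only [Finset.mem_insert]
              rintro (h | h)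
              · exact (hh_ne_f0 i) h.symm
              · exact h0 h
            refine ⟨fun h => absurd h hf0, fun h => absurd h hf0, ?_⟩
            intro hgk hhk
            rcases Finset.mem_insert.mp hgk with h | hgk'
            · exact (gg_ne_hh k i) h
            rcases Finset.mem_insert.mp hhk with h | hhk'
            · obtain rfl := hh_inj.mp h
              exact hgg hgk'
            · exact (H k).2.2 hgk' hhk'
          have := hmax _ (Finset.subset_insert _ _) hsub' hsat'
          exact hne (this ▸ Finset.mem_insert_self (hh i) E)
  · rintro (rfl | ⟨s, hs, rfl⟩)
    · refine ⟨by simpa using (f0_mem_D17 (n := n)), ?_, ?_⟩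
      · rw [sat_iff (by simpa using (f0_mem_D17 (n := n)))]
        intro i
        refine ⟨fun _ h => ?_, fun _ h => ?_, fun h _ => ?_⟩
        · exact (gg_ne_f0 i) (Finset.mem_singleton.mp h)
        · exact (hh_ne_f0 i) (Finset.mem_singleton.mp h)
        · exact (gg_ne_f0 i) (Finset.mem_singleton.mp h)
      · intro G hEG hGD hsatG
        have HG := (sat_iff hGD).mp hsatG
        have h0 : f0 ∈ G := hEG (Finset.mem_singleton_self f0)
        apply Finset.Subset.antisymm _ hEG
        intro f hf
        rcases mem_D17.mp (hGD hf) with rfl | ⟨i, hi, rfl | rfl⟩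
        · exact Finset.mem_singleton_self f0
        · exact absurd hf ((HG i).1 h0)
        · exact absurd hf ((HG i).2.1 h0)
    · refine ⟨choiceRep_subset, ?_, ?_⟩
      · rw [sat_iff choiceRep_subset]
        intro i
        refine ⟨fun h _ => f0_notMem_choiceRep h, fun h _ => f0_notMem_choiceRep h,
          fun h1 h2 => ?_⟩
        exact absurd (gg_mem_choiceRep.mp h1).2 (hh_mem_choiceRep.mp h2).2
      · intro G hEG hGD hsatG
        have HG := (sat_iff hGD).mp hsatG
        apply Finset.Subset.antisymm _ hEG
        intro f hf
        have hE0 : (if 0 ∈ s then gg 0 else hh 0) ∈ choiceRep n s := by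
          simp only [choiceRep, Finset.mem_image, Finset.mem_range]
          exact ⟨0, hn, rfl⟩
        rcases mem_D17.mp (hGD hf) with rfl | ⟨i, hi, rfl | rfl⟩
        · exfalso
          by_cases h : 0 ∈ s
          · simp only [h, if_true] at hE0
            exact (HG 0).1 hf (hEG hE0)
          · simp only [h, if_false] at hE0
            exact (HG 0).2.1 hf (hEG hE0)
        · refine gg_mem_choiceRep.mpr ⟨hi, ?_⟩
          by_contra h
          have : hh i ∈ choiceRep n s := hh_mem_choiceRep.mpr ⟨hi, h⟩
          exact (HG i).2.2 hf (hEG this)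
        · refine hh_mem_choiceRep.mpr ⟨hi, ?_⟩
          intro h
          have : gg i ∈ choiceRep n s := gg_mem_choiceRep.mpr ⟨hi, h⟩
          exact (HG i).2.2 (hEG this) hf

lemma rep_eq {n : ℕ} (hn : 0 < n) :
    rep (D17 n) sigma17 =
      insert {f0} ((Finset.range n).powerset.image (choiceRep n)) := by
  ext E
  simp only [rep, Finset.mem_filter, Finset.mem_powerset, Finset.mem_insert,
    Finset.mem_image]
  constructor
  · rintro ⟨-, hrep⟩
    rcases (isRepair_iff hn).mp hrep with rfl | ⟨s, hs, rfl⟩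
    · exact Or.inl rfl
    · exact Or.inr ⟨s, hs, rfl⟩
  · rintro (rfl | ⟨s, hs, rfl⟩)
    · have hrep := (isRepair_iff (E := ({f0} : Finset F)) hn).mpr (Or.inl rfl)
      exact ⟨hrep.1, hrep⟩
    · have hrep := (isRepair_iff (E := choiceRep n s) hn).mpr
        (Or.inr ⟨s, hs, rfl⟩)
      exact ⟨hrep.1, hrep⟩

lemma card_rep {n : ℕ} (hn : 0 < n) :
    (rep (D17 n) sigma17).card = 2 ^ n + 1 := by
  rw [rep_eq hn]
  rw [Finset.card_insert_of_notMem, Finset.card_image_of_injOn]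
  · rw [Finset.card_powerset, Finset.card_range]
  · intro s hs t ht hst
    have hs' := Finset.mem_powerset.mp (Finset.mem_coe.mp hs)
    have ht' := Finset.mem_powerset.mp (Finset.mem_coe.mp ht)
    ext i
    constructor
    · intro his
      have hi : i < n := Finset.mem_range.mp (hs' his)
      have : gg i ∈ choiceRep n t := hst ▸ gg_mem_choiceRep.mpr ⟨hi, his⟩
      exact (gg_mem_choiceRep.mp this).2
    · intro hit
      have hi : i < n := Finset.mem_range.mp (ht' hit)
      have : gg i ∈ choiceRep n s := hst.symm ▸ gg_mem_choiceRep.mpr ⟨hi, hit⟩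
      exact (gg_mem_choiceRep.mp this).2
  · simp only [Finset.mem_image]
    rintro ⟨s, hs, hE⟩
    have : f0 ∈ choiceRep n s := hE.symm ▸ Finset.mem_singleton_self f0
    exact f0_notMem_choiceRep this

noncomputable def atom17 : DBAtom Unit (Fin 4) (Fin 3) C17 :=
  ⟨(), ![DBTerm.var 0, DBTerm.var 0, DBTerm.var 1, DBTerm.var 2]⟩

lemma atom17_mem : atom17 ∈ q17 := Finset.mem_singleton_self _

lemma entails_iff {n : ℕ} {E : Finset F} (hE : E ⊆ D17 n) :
    entails E q17 ↔ f0 ∈ E := by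
  constructor
  · rintro ⟨h, hm⟩
    have hmem : applyHom h atom17 ∈ E := hm atom17 atom17_mem
    rcases mem_D17.mp (hE hmem) with hf | ⟨i, hi, hf | hf⟩
    · rwa [hf] at hmem
    · exfalso
      have e0 : h 0 = C17.a := congrArg (fun x => DBFact.val x 0) hf
      have e1 : h 0 = C17.b := congrArg (fun x => DBFact.val x 1) hf
      exact C17.noConfusion (e0 ▸ e1)
    · exfalso
      have e0 : h 0 = C17.a := congrArg (fun x => DBFact.val x 0) hf
      have e1 : h 0 = C17.b := congrArg (fun x => DBFact.val x 1) hf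
      exact C17.noConfusion (e0 ▸ e1)
  · intro hf0
    refine ⟨fun _ => C17.a, ?_⟩
    intro α hα
    have hα' : α = atom17 := Finset.mem_singleton.mp hα
    subst hα'
    have : applyHom (fun _ => C17.a) atom17 = f0 := by
      show (⟨(), _⟩ : F) = ⟨(), _⟩
      congr 1
      funext A
      fin_cases A <;> rfl
    rwa [this]

lemma repQ_eq {n : ℕ} (hn : 0 < n) :
    repQ (D17 n) sigma17 q17 = {({f0} : Finset F)} := by
  ext E
  simp only [repQ, Finset.mem_filter, Finset.mem_singleton]
  constructor
  · rintro ⟨hrep, hent⟩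
    rw [rep_eq hn] at hrep
    rcases Finset.mem_insert.mp hrep with rfl | hrep'
    · rfl
    · exfalso
      obtain ⟨s, hs, rfl⟩ := Finset.mem_image.mp hrep'
      have := (entails_iff choiceRep_subset).mp hent
      exact f0_notMem_choiceRep this
  · rintro rfl
    refine ⟨?_, ?_⟩
    · rw [rep_eq hn]; exact Finset.mem_insert_self _ _
    · exact (entails_iff (n := n) (by simpa using (f0_mem_D17 (n := n)))).mpr
        (Finset.mem_singleton_self f0)

lemma card_D17 (n : ℕ) : (D17 n).card = 2 * n + 1 := by
  have hD : D17 n = insert f0 ((Finset.range n).biUnion fun i => {gg i, hh i}) := rfl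
  rw [hD, Finset.card_insert_of_notMem, Finset.card_biUnion]
  · have : ∀ i, ({gg i, hh i} : Finset F).card = 2 := by
      intro i
      rw [Finset.card_insert_of_notMem (by simp), Finset.card_singleton]
    simp only [this, Finset.sum_const, Finset.card_range, smul_eq_mul]
    ring
  · intro i _ j _ hij
    simp only [Finset.disjoint_left, Finset.mem_insert, Finset.mem_singleton]
    rintro x (rfl | rfl) h
    · rcases h with h | h
      · exact hij (gg_inj.mp h)
      · exact (gg_ne_hh i j) h
    · rcases h with h | h
      · exact (gg_ne_hh j i) h.symm
      · exact hij (hh_inj.mp h)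
  · intro hmem
    simp only [Finset.mem_biUnion, Finset.mem_insert, Finset.mem_singleton] at hmem
    obtain ⟨i, -, h | h⟩ := hmem
    · exact (gg_ne_f0 i) h.symm
    · exact (hh_ne_f0 i) h.symm

end Stmt17Aux

/-- `sigma17` has an LHS chain, and for every `n > 0`, `|D_n| = 2n + 1` and
`rfreq(Q, D_n, Σ) = 1/(2^n + 1)`. -/
theorem stmt_17 :
    hasLHSChain sigma17 ∧
    ∀ n : ℕ, 0 < n →
      (D17 n).card = 2 * n + 1 ∧
      rfreq q17 (D17 n) sigma17 = 1 / (2 ^ n + 1) := by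
  open Stmt17Aux in
  constructor
  · intro φ hφ ψ hψ _
    rcases hφ with rfl | rfl <;> rcases hψ with rfl | rfl
    · exact Or.inl subset_rfl
    · exact Or.inl (by simp)
    · exact Or.inr (by simp)
    · exact Or.inl subset_rfl
  · intro n hn
    refine ⟨card_D17 n, ?_⟩
    rw [rfreq, card_rep hn, repQ_eq hn, Finset.card_singleton]
    push_cast
    norm_num
end
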